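/- arXiv:2010.12215 — 5 statements merged into one kernel-verified Lean document; each statement's English description precedes it below -/
import Mathlib

section
/- Let E be a Dedekind complete Riesz space and (f_n)_{n≥0} a sequence in E with f_n → 0 in order as n → ∞. Then the Cesàro means of the absolute values converge to zero in order: (1/n) ∑_{k=0}^{n-1} |f_k| → 0 in order as n → ∞. -/
/-!
If `|f n| ≤ y n` with `y n ↓ 0`, the Cesàro means of `|f|` are dominated by those of `y`. These are
antitone because `y` is, and their infimum is still `0`: a lower bound `c` of the means satisfies
`(m + k) • c ≤ ∑_{i<m} y i + k • y m` for all `k`, so `k • (c - y m)` is bounded above, and the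
Archimedean property of a Dedekind complete ordered group gives `c ≤ y m` for every `m`.
-/

open Filter Finset

/-- Order convergence of a sequence in a Riesz space: there is a sequence
decreasing to `0` dominating `|x n - l|`. -/
def OrderConvergesTo {E : Type*} [Lattice E] [AddCommGroup E] (x : ℕ → E) (l : E) : Prop :=
  ∃ y : ℕ → E, Antitone y ∧ IsGLB (Set.range y) (0 : E) ∧ ∀ n, |x n - l| ≤ y n

/-- A band (order) projection: a linear idempotent `P` with `0 ≤ P f ≤ f` for `f ≥ 0`. -/
def IsBandProjection {E : Type*} [Lattice E] [AddCommGroup E] [Module ℝ E]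
    (P : Module.End ℝ E) : Prop :=
  P * P = P ∧ ∀ f : E, 0 ≤ f → 0 ≤ P f ∧ P f ≤ f

/-- `e` is a weak order unit. -/
def IsWeakOrderUnit {E : Type*} [Lattice E] [AddCommGroup E] (e : E) : Prop :=
  0 < e ∧ ∀ f : E, 0 ≤ f → f ⊓ e = 0 → f = 0

lemma sum_range_add_le_of_antitone {E : Type*} [AddCommGroup E] [PartialOrder E]
    [IsOrderedAddMonoid E] {y : ℕ → E} (hy : Antitone y) (m k : ℕ) :
    ∑ i ∈ range (m + k), y i ≤ ∑ i ∈ range m, y i + k • y m := by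
  rw [sum_range_add]
  gcongr
  simpa using sum_le_card_nsmul (range k) (fun i => y (m + i)) (y m)
    fun i _ => hy (Nat.le_add_right m i)

lemma nonpos_of_forall_nsmul_le {E : Type*} [AddCommGroup E] [ConditionallyCompleteLattice E]
    [IsOrderedAddMonoid E] {a d : E} (h : ∀ n : ℕ, n • d ≤ a) : d ≤ 0 := by
  have hbdd : BddAbove (Set.range fun n : ℕ => n • d) := ⟨a, by rintro _ ⟨n, rfl⟩; exact h n⟩
  set s := ⨆ n : ℕ, n • d
  have hs : s + d ≤ s := by
    rw [← le_sub_iff_add_le]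
    refine ciSup_le fun n => le_sub_iff_add_le.2 ?_
    rw [← succ_nsmul]
    exact le_ciSup hbdd (n + 1)
  simpa using hs

section Cesaro

variable {E : Type*} [AddCommGroup E] [Module ℝ E]

/-- The Cesàro mean `(1/n) ∑_{k<n} y k`, with the junk value `cesaroMean y 0 = 0`. -/
noncomputable def cesaroMean (y : ℕ → E) (n : ℕ) : E := (n : ℝ)⁻¹ • ∑ k ∈ range n, y k

lemma nsmul_cesaroMean (y : ℕ → E) {n : ℕ} (hn : n ≠ 0) :
    n • cesaroMean y n = ∑ k ∈ range n, y k := by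
  rw [cesaroMean, ← Nat.cast_smul_eq_nsmul ℝ, smul_smul,
    mul_inv_cancel₀ (Nat.cast_ne_zero.2 hn), one_smul]

variable [PartialOrder E] [PosSMulMono ℝ E]

lemma le_cesaroMean_iff {y : ℕ → E} {c : E} {n : ℕ} (hn : n ≠ 0) :
    c ≤ cesaroMean y n ↔ n • c ≤ ∑ k ∈ range n, y k := by
  rw [cesaroMean, le_inv_smul_iff_of_pos (by positivity), Nat.cast_smul_eq_nsmul]

variable [IsOrderedAddMonoid E]

lemma cesaroMean_mono {x y : ℕ → E} (h : x ≤ y) (n : ℕ) : cesaroMean x n ≤ cesaroMean y n :=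
  smul_le_smul_of_nonneg_left (sum_le_sum fun k _ => h k) (by positivity)

lemma antitone_cesaroMean_succ {y : ℕ → E} (hy : Antitone y) :
    Antitone fun n => cesaroMean y (n + 1) := by
  refine antitone_nat_of_succ_le fun n => ?_
  have hy_le : y (n + 1) ≤ cesaroMean y (n + 2) := (le_cesaroMean_iff (by omega)).2 <| by
    simpa using card_nsmul_le_sum (range (n + 2)) y (y (n + 1))
      fun k hk => hy (Nat.lt_succ_iff.1 (mem_range.1 hk))
  have hsum := nsmul_cesaroMean y (n + 1).succ_ne_zero
  rw [sum_range_succ, succ_nsmul] at hsum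
  rw [le_cesaroMean_iff n.succ_ne_zero, eq_sub_of_add_eq hsum, add_sub_assoc]
  exact add_le_of_nonpos_right (sub_nonpos.2 hy_le)

end Cesaro

lemma isGLB_cesaroMean_succ {E : Type*} [AddCommGroup E] [ConditionallyCompleteLattice E]
    [IsOrderedAddMonoid E] [Module ℝ E] [PosSMulMono ℝ E] {y : ℕ → E} {a : E}
    (hy : Antitone y) (ha : IsGLB (Set.range y) a) :
    IsGLB (Set.range fun n => cesaroMean y (n + 1)) a := by
  refine ⟨?_, fun c hc => ha.2 ?_⟩
  · rintro _ ⟨n, rfl⟩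
    exact (le_cesaroMean_iff n.succ_ne_zero).2 <| by
      simpa using card_nsmul_le_sum (range (n + 1)) y a fun k _ => ha.1 ⟨k, rfl⟩
  · have hc_sum : ∀ n : ℕ, n • c ≤ ∑ k ∈ range n, y k := by
      rintro (_ | n)
      · simp
      · exact (le_cesaroMean_iff n.succ_ne_zero).1 (hc ⟨n, rfl⟩)
    rintro _ ⟨m, rfl⟩
    refine sub_nonpos.1 (nonpos_of_forall_nsmul_le (a := ∑ k ∈ range m, y k - m • c) fun k => ?_)
    have h := (hc_sum (m + k)).trans (sum_range_add_le_of_antitone hy m k)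
    rw [nsmul_sub, sub_le_sub_iff, add_comm (k • c)]
    rwa [add_nsmul] at h

/-- If `f n → 0` in order then the Cesàro means of `|f k|` converge to `0` in order. -/
theorem stmt1 {E : Type*} [ConditionallyCompleteLattice E] [AddCommGroup E]
    [CovariantClass E E (· + ·) (· ≤ ·)] [Module ℝ E] [PosSMulMono ℝ E]
    (f : ℕ → E) (hf : OrderConvergesTo f 0) :
    OrderConvergesTo (fun n => (n : ℝ)⁻¹ • ∑ k ∈ Finset.range n, |f k|) 0 := by
  have : IsOrderedAddMonoid E :=
    ⟨fun _ _ h c => add_le_add_left h c, fun _ _ h c => add_le_add_right h c⟩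
  show OrderConvergesTo (cesaroMean fun k => |f k|) 0
  obtain ⟨y, hy, hy_glb, hfy⟩ := hf
  have hglb := isGLB_cesaroMean_succ hy hy_glb
  -- index `0` reuses `cesaroMean y 1`, since the mean at `0` is the junk value `0`
  refine ⟨fun n => cesaroMean y (n - 1 + 1),
    (antitone_cesaroMean_succ hy).comp_monotone fun _ _ h => Nat.sub_le_sub_right h 1, ?_, ?_⟩
  · have hsurj : Function.Surjective (· - 1 : ℕ → ℕ) := fun n => ⟨n + 1, rfl⟩
    rwa [← hsurj.range_comp] at hglb
  · rintro (_ | n)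
    · simpa [cesaroMean] using hglb.1 ⟨0, rfl⟩
    · have hmean_nonneg : 0 ≤ cesaroMean (fun k => |f k|) (n + 1) :=
        smul_nonneg (by positivity) (sum_nonneg fun k _ => abs_nonneg (f k))
      dsimp only
      rw [sub_zero, abs_of_nonneg hmean_nonneg]
      exact cesaroMean_mono (fun k => by simpa using hfy k) (n + 1)
end

section
/- Let E be a Dedekind complete Riesz space with weak order unit e and (f_n)_{n≥0} an order bounded sequence in E_+ with (1/n) ∑_{k=0}^{n-1} f_k → 0 in order as n → ∞. Then there exists a density zero sequence of band projections (P_n)_{n≥0} on E (i.e. (1/n) ∑_{k=0}^{n-1} P_k e → 0 in order) such that (I − P_n) f_n → 0 in order as n → ∞. -/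
open Filter Finset

/-!
The hypothesis gives `y` decreasing to `0` with `∑_{k<n} f k ≤ n y n`. Let `P k` be the band
projection onto `(f k - y k - t k)⁺`, with threshold `t k = min_{1 ≤ M ≤ k+1} (M⁻¹ e + M³ y k)`.
Then `(1 - P k) f k ≤ y k + t k`, and `t k ≤ M⁻¹ e + M³ y k` for `k ≥ M` makes this tend to `0`.

For the density, cut `E` into the layers where `(m+1)⁻³ e < y k ≤ m⁻³ e`. On the `m`-th layer
`t k ≥ (m+1)⁻¹ e`, so `P k e ≤ (m+1) f k` there; for `k < n` these layers lie in the band where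
`y n ≤ m⁻³ e`, on which `∑_{k<n} f k ≤ n y n ≤ n m⁻³ e`, so they add at most `(m+1) n m⁻³ e` to
`∑_{k<n} P k e`. As `f k ≤ (k+1) y k`, `P k` lives where `y k > (k+1)⁻³ e`; summing the layers
`m ≥ M` gives `∑_{k<n} P k e ≤ n₀ e + n M³ y n₀ + 2 n (M-1)⁻¹ e` for `M ≤ n₀ ≤ n`.

The band projection generated by `u ≥ 0` is `x ↦ ⨆ m, x ⊓ m u` on the positive cone. A linear `P`
with `0 ≤ P ≤ 1` on the positive cone is a lattice homomorphism, so the layer projections pass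
through the finite minimum defining `t k`.
-/

section LatticeGroup

variable {E : Type*} [Lattice E] [AddCommGroup E] [IsOrderedAddMonoid E]

theorem add_inf_le_inf_add_inf {x y c : E} (hx : 0 ≤ x) (hy : 0 ≤ y) (hc : 0 ≤ c) :
    (x + y) ⊓ c ≤ x ⊓ c + y ⊓ c := by
  rw [inf_add, add_inf, add_inf]
  exact le_inf (le_inf inf_le_left (inf_le_right.trans (le_add_of_nonneg_left hx)))
    (le_inf (inf_le_right.trans (le_add_of_nonneg_right hy))
      (inf_le_right.trans (le_add_of_nonneg_left hc)))

theorem posPart_sub_eq_of_inf_eq_zero {a b : E} (h : a ⊓ b = 0) : (a - b)⁺ = a := by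
  have hab : a ⊔ b = a + b := by rw [← inf_add_sup a b, h, zero_add]
  rw [posPart_def, ← sub_self b, ← sup_sub, hab, add_sub_cancel_right]

theorem LinearMap.ext_of_nonneg {F : Type*} [AddCommGroup F] [Module ℝ E] [Module ℝ F]
    {P Q : E →ₗ[ℝ] F} (h : ∀ x, 0 ≤ x → P x = Q x) : P = Q :=
  LinearMap.ext fun x => by
    rw [← posPart_sub_negPart x, map_sub, map_sub, h _ (posPart_nonneg x), h _ (negPart_nonneg x)]

end LatticeGroup

section Operators

variable {E : Type*} [Lattice E] [AddCommGroup E] [Module ℝ E] {P Q : Module.End ℝ E}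

def IsPosLeId (P : Module.End ℝ E) : Prop :=
  ∀ x : E, 0 ≤ x → 0 ≤ P x ∧ P x ≤ x

theorem IsPosLeId.mul (hP : IsPosLeId P) (hQ : IsPosLeId Q) : IsPosLeId (P * Q) := fun x hx =>
  ⟨(hP _ (hQ x hx).1).1, (hP _ (hQ x hx).1).2.trans (hQ x hx).2⟩

theorem IsBandProjection.isPosLeId (hP : IsBandProjection P) : IsPosLeId P := hP.2

theorem IsBandProjection.apply_apply (hP : IsBandProjection P) (x : E) : P (P x) = P x :=
  LinearMap.congr_fun hP.1 x

variable [IsOrderedAddMonoid E]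

theorem IsPosLeId.one_sub (hP : IsPosLeId P) : IsPosLeId (1 - P) := fun x hx => by
  simp only [LinearMap.sub_apply, Module.End.one_apply, sub_nonneg, sub_le_self_iff]
  exact (hP x hx).symm

theorem IsPosLeId.monotone (hP : IsPosLeId P) : Monotone P := fun a b hab => by
  simpa [map_sub] using (hP (b - a) (sub_nonneg.2 hab)).1

theorem IsPosLeId.map_posPart (hP : IsPosLeId P) (x : E) : P x⁺ = (P x)⁺ := by
  have hdisj : P x⁺ ⊓ P x⁻ = 0 := le_antisymm
    ((inf_le_inf (hP _ (posPart_nonneg x)).2 (hP _ (negPart_nonneg x)).2).trans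
      (posPart_inf_negPart_eq_zero x).le)
    (le_inf (hP _ (posPart_nonneg x)).1 (hP _ (negPart_nonneg x)).1)
  conv_rhs => rw [← posPart_sub_negPart x, map_sub]
  exact (posPart_sub_eq_of_inf_eq_zero hdisj).symm

theorem IsPosLeId.map_inf (hP : IsPosLeId P) (x y : E) : P (x ⊓ y) = P x ⊓ P y := by
  rw [inf_eq_sub_posPart_sub, map_sub, hP.map_posPart, map_sub, ← inf_eq_sub_posPart_sub]

theorem IsPosLeId.apply_eq_self_of_le (hP : IsPosLeId P) {z a : E} (hz : 0 ≤ z) (hza : z ≤ a)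
    (ha : P a = a) : P z = z := by
  have h := hP.one_sub.monotone hza
  have h0 := (hP.one_sub z hz).1
  simp only [LinearMap.sub_apply, Module.End.one_apply, ha, sub_self] at h h0
  exact (sub_eq_zero.1 (le_antisymm h h0)).symm

theorem IsBandProjection.one_sub (hP : IsBandProjection P) : IsBandProjection (1 - P) := by
  refine ⟨?_, hP.isPosLeId.one_sub⟩
  rw [sub_mul, one_mul, mul_sub, mul_one, hP.1, sub_self, sub_zero]

/-- For `x ≥ 0` both `P (Q x)` and `Q (P x)` equal `P x ⊓ Q x`. -/
theorem IsBandProjection.commute (hP : IsBandProjection P) (hQ : IsBandProjection Q) :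
    P * Q = Q * P := by
  have key : ∀ {P Q : Module.End ℝ E}, IsBandProjection P → IsBandProjection Q →
      ∀ x, 0 ≤ x → P (Q x) = P x ⊓ Q x := by
    intro P Q hP hQ x hx
    have hz : 0 ≤ P x ⊓ Q x := le_inf (hP.2 x hx).1 (hQ.2 x hx).1
    have hPz := hP.isPosLeId.apply_eq_self_of_le hz inf_le_left (hP.apply_apply x)
    have hQz := hQ.isPosLeId.apply_eq_self_of_le hz inf_le_right (hQ.apply_apply x)
    refine le_antisymm (le_inf (hP.isPosLeId.monotone (hQ.2 x hx).2) (hP.2 _ (hQ.2 x hx).1).2) ?_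
    calc P x ⊓ Q x = P (Q (P x ⊓ Q x)) := by rw [hQz, hPz]
      _ ≤ P (Q x) :=
        hP.isPosLeId.monotone (hQ.isPosLeId.monotone (inf_le_left.trans (hP.2 x hx).2))
  refine LinearMap.ext_of_nonneg fun x hx => ?_
  rw [Module.End.mul_apply, Module.End.mul_apply, key hP hQ x hx, key hQ hP x hx, inf_comm]

theorem IsBandProjection.mul (hP : IsBandProjection P) (hQ : IsBandProjection Q) :
    IsBandProjection (P * Q) := by
  refine ⟨?_, hP.isPosLeId.mul hQ.isPosLeId⟩
  calc P * Q * (P * Q) = P * (Q * P) * Q := by simp only [mul_assoc]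
    _ = P * P * (Q * Q) := by rw [← hP.commute hQ]; simp only [mul_assoc]
    _ = P * Q := by rw [hP.1, hQ.1]

end Operators

section BandProjection

variable {E : Type*} [ConditionallyCompleteLattice E] [AddCommGroup E] [Module ℝ E] {u v x y : E}

noncomputable def bandPart (u x : E) : E := ⨆ m : ℕ, x ⊓ (m : ℝ) • u

theorem bddAbove_range_inf_smul (u x : E) :
    BddAbove (Set.range fun m : ℕ => x ⊓ (m : ℝ) • u) :=
  ⟨x, by rintro _ ⟨m, rfl⟩; exact inf_le_left⟩

theorem inf_smul_le_bandPart (u x : E) (m : ℕ) : x ⊓ (m : ℝ) • u ≤ bandPart u x :=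
  le_ciSup (bddAbove_range_inf_smul u x) m

theorem bandPart_le {c : E} (h : ∀ m : ℕ, x ⊓ (m : ℝ) • u ≤ c) : bandPart u x ≤ c :=
  ciSup_le h

theorem bandPart_le_self (u x : E) : bandPart u x ≤ x :=
  bandPart_le fun _ => inf_le_left

theorem bandPart_nonneg (u : E) (hx : 0 ≤ x) : 0 ≤ bandPart u x := by
  simpa [inf_eq_right.2 hx] using inf_smul_le_bandPart u x 0

theorem bandPart_zero (u : E) : bandPart u 0 = 0 :=
  le_antisymm (bandPart_le_self u 0) (bandPart_nonneg u le_rfl)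

theorem bandPart_eq_self_of_le {m : ℕ} (h : x ≤ (m : ℝ) • u) : bandPart u x = x :=
  le_antisymm (bandPart_le_self u x) (by simpa [inf_eq_left.2 h] using inf_smul_le_bandPart u x m)

theorem bandPart_bandPart (u x : E) : bandPart u (bandPart u x) = bandPart u x :=
  le_antisymm (bandPart_le_self u _) (bandPart_le fun m =>
    (le_inf (inf_smul_le_bandPart u x m) inf_le_right).trans (inf_smul_le_bandPart u _ m))

variable [IsOrderedAddMonoid E] [PosSMulMono ℝ E]

theorem bandPart_eq_zero_of_inf_eq_zero (hu : 0 ≤ u) (hx : 0 ≤ x) (h : x ⊓ u = 0) :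
    bandPart u x = 0 := by
  refine le_antisymm (bandPart_le fun m => ?_) (bandPart_nonneg u hx)
  induction m with
  | zero => simp [inf_eq_right.2 hx]
  | succ m ih =>
    calc x ⊓ ((m + 1 : ℕ) : ℝ) • u = ((m : ℝ) • u + u) ⊓ x := by
          rw [inf_comm]; push_cast; rw [add_smul, one_smul]
      _ ≤ (m : ℝ) • u ⊓ x + u ⊓ x := add_inf_le_inf_add_inf (smul_nonneg m.cast_nonneg hu) hu hx
      _ ≤ 0 := by rw [inf_comm, inf_comm u, h, add_zero]; exact ih

theorem bandPart_add (hu : 0 ≤ u) (hx : 0 ≤ x) (hy : 0 ≤ y) :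
    bandPart u (x + y) = bandPart u x + bandPart u y := by
  refine le_antisymm (bandPart_le fun m => ?_) ?_
  · exact (add_inf_le_inf_add_inf hx hy (smul_nonneg m.cast_nonneg hu)).trans
      (add_le_add (inf_smul_le_bandPart u x m) (inf_smul_le_bandPart u y m))
  change (⨆ m : ℕ, x ⊓ (m : ℝ) • u) + (⨆ n : ℕ, y ⊓ (n : ℝ) • u) ≤ _
  rw [ciSup_add (bddAbove_range_inf_smul u x)]
  refine ciSup_le fun m => ?_
  rw [add_ciSup (bddAbove_range_inf_smul u y)]
  refine ciSup_le fun n => le_trans ?_ (inf_smul_le_bandPart u (x + y) (m + n))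
  rw [Nat.cast_add, add_smul]
  exact le_inf (add_le_add inf_le_left inf_le_left) (add_le_add inf_le_right inf_le_right)

theorem bandPart_smul (hu : 0 ≤ u) (x : E) {c : ℝ} (hc : 0 ≤ c) :
    bandPart u (c • x) = c • bandPart u x := by
  rcases hc.eq_or_lt with rfl | hc
  · simp [bandPart_zero]
  have hsmul : ∀ a b : ℝ, a ≤ b → a • u ≤ b • u := fun a b h => smul_le_smul_of_nonneg_right h hu
  refine le_antisymm (bandPart_le fun m => ?_) ?_
  · calc c • x ⊓ (m : ℝ) • u ≤ c • x ⊓ c • ((⌈m / c⌉₊ : ℕ) : ℝ) • u := by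
          refine inf_le_inf_left _ ?_
          rw [smul_smul]
          exact hsmul _ _ (by rw [← div_le_iff₀' hc]; exact Nat.le_ceil _)
      _ = c • (x ⊓ ((⌈m / c⌉₊ : ℕ) : ℝ) • u) := ((OrderIso.smulRight hc).map_inf _ _).symm
      _ ≤ c • bandPart u x := smul_le_smul_of_nonneg_left (inf_smul_le_bandPart u x _) hc.le
  have h := (OrderIso.smulRight hc).map_ciSup (bddAbove_range_inf_smul u x)
  simp only [OrderIso.smulRight_apply] at h
  rw [bandPart, h]
  refine ciSup_le fun m => ?_
  calc c • (x ⊓ (m : ℝ) • u) = c • x ⊓ (c * m) • u := by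
        rw [mul_smul]; exact (OrderIso.smulRight hc).map_inf _ _
    _ ≤ c • x ⊓ ((⌈c * m⌉₊ : ℕ) : ℝ) • u := inf_le_inf_left _ (hsmul _ _ (Nat.le_ceil _))
    _ ≤ bandPart u (c • x) := inf_smul_le_bandPart u _ _

theorem bandPart_posPart_sub_bandPart_negPart (hu : 0 ≤ u) {p q : E} (hp : 0 ≤ p) (hq : 0 ≤ q) :
    bandPart u (p - q)⁺ - bandPart u (p - q)⁻ = bandPart u p - bandPart u q := by
  have h := congrArg (bandPart u) (sub_eq_sub_iff_add_eq_add.1 (posPart_sub_negPart (p - q)))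
  rw [bandPart_add hu (posPart_nonneg _) hq, bandPart_add hu hp (negPart_nonneg _)] at h
  exact sub_eq_sub_iff_add_eq_add.2 h

open Classical in
/-- `0` (a junk value) unless `0 ≤ u`. -/
noncomputable def bandProj (u : E) : Module.End ℝ E :=
  if hu : 0 ≤ u then
    { toFun := fun x => bandPart u x⁺ - bandPart u x⁻
      map_add' := fun x y => by
        have hxy : x + y = (x⁺ + y⁺) - (x⁻ + y⁻) := by
          rw [add_sub_add_comm, posPart_sub_negPart, posPart_sub_negPart]
        rw [hxy, bandPart_posPart_sub_bandPart_negPart hu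
            (add_nonneg (posPart_nonneg x) (posPart_nonneg y))
            (add_nonneg (negPart_nonneg x) (negPart_nonneg y)),
          bandPart_add hu (posPart_nonneg x) (posPart_nonneg y),
          bandPart_add hu (negPart_nonneg x) (negPart_nonneg y), add_sub_add_comm]
      map_smul' := fun c x => by
        simp only [RingHom.id_apply]
        rcases le_total 0 c with hc | hc
        · have hcx : c • x = c • x⁺ - c • x⁻ := by rw [← smul_sub, posPart_sub_negPart]
          rw [hcx, bandPart_posPart_sub_bandPart_negPart hu (smul_nonneg hc (posPart_nonneg x))
              (smul_nonneg hc (negPart_nonneg x)), bandPart_smul hu _ hc, bandPart_smul hu _ hc,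
            smul_sub]
        · have hc' : 0 ≤ -c := neg_nonneg.2 hc
          have hcx : c • x = (-c) • x⁻ - (-c) • x⁺ := by
            rw [← smul_sub, neg_smul, ← smul_neg, neg_sub, posPart_sub_negPart]
          rw [hcx, bandPart_posPart_sub_bandPart_negPart hu (smul_nonneg hc' (negPart_nonneg x))
              (smul_nonneg hc' (posPart_nonneg x)), bandPart_smul hu _ hc',
            bandPart_smul hu _ hc', ← smul_sub, neg_smul, ← smul_neg, neg_sub] }
  else 0

theorem bandProj_apply_of_nonneg (hu : 0 ≤ u) (hx : 0 ≤ x) : bandProj u x = bandPart u x := by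
  simp [bandProj, hu, posPart_of_nonneg hx, negPart_of_nonneg hx, bandPart_zero]

theorem isBandProjection_bandProj (hu : 0 ≤ u) : IsBandProjection (bandProj u) := by
  refine ⟨LinearMap.ext_of_nonneg fun x hx => ?_, fun x hx => ?_⟩
  · rw [Module.End.mul_apply, bandProj_apply_of_nonneg hu hx,
      bandProj_apply_of_nonneg hu (bandPart_nonneg u hx), bandPart_bandPart]
  · rw [bandProj_apply_of_nonneg hu hx]
    exact ⟨bandPart_nonneg u hx, bandPart_le_self u x⟩

theorem bandProj_posPart_self (d : E) : bandProj d⁺ d = d⁺ := by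
  have hdisj : d⁻ ⊓ d⁺ = 0 := by rw [inf_comm, posPart_inf_negPart_eq_zero]
  have h := congrArg (bandProj d⁺) (posPart_sub_negPart d)
  rw [map_sub] at h
  rw [← h, bandProj_apply_of_nonneg (posPart_nonneg d) (posPart_nonneg d),
    bandProj_apply_of_nonneg (posPart_nonneg d) (negPart_nonneg d),
    bandPart_eq_self_of_le (m := 1) (by rw [Nat.cast_one, one_smul]),
    bandPart_eq_zero_of_inf_eq_zero (posPart_nonneg d) (negPart_nonneg d) hdisj, sub_zero]

theorem IsPosLeId.mul_bandProj {P : Module.End ℝ E} (hP : IsPosLeId P) (hu : 0 ≤ u)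
    (hPu : P u = u) : P * bandProj u = bandProj u := by
  refine LinearMap.ext_of_nonneg fun x hx => ?_
  rw [Module.End.mul_apply, bandProj_apply_of_nonneg hu hx]
  refine le_antisymm (hP _ (bandPart_nonneg u hx)).2 (bandPart_le fun m => ?_)
  have hmu : P ((m : ℝ) • u) = (m : ℝ) • u := by rw [map_smul, hPu]
  rw [← hP.apply_eq_self_of_le (le_inf hx (smul_nonneg m.cast_nonneg hu)) inf_le_right hmu]
  exact hP.monotone (inf_smul_le_bandPart u x m)

theorem bandProj_mul_bandProj_of_le (hu : 0 ≤ u) (huv : u ≤ v) :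
    bandProj v * bandProj u = bandProj u :=
  (isBandProjection_bandProj (hu.trans huv)).isPosLeId.mul_bandProj hu <| by
    rw [bandProj_apply_of_nonneg (hu.trans huv) hu,
      bandPart_eq_self_of_le (m := 1) (by rwa [Nat.cast_one, one_smul])]

theorem bandProj_apply_le_of_le (hu : 0 ≤ u) (huv : u ≤ v) (hx : 0 ≤ x) :
    bandProj u x ≤ bandProj v x := by
  rw [← bandProj_mul_bandProj_of_le hu huv, Module.End.mul_apply]
  exact (isBandProjection_bandProj (hu.trans huv)).isPosLeId.monotone
    ((isBandProjection_bandProj hu).2 x hx).2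

theorem bandProj_posPart_sub_apply_le (a b : E) : bandProj (a - b)⁺ b ≤ bandProj (a - b)⁺ a := by
  rw [← sub_nonneg, ← map_sub, bandProj_posPart_self]
  exact posPart_nonneg _

theorem one_sub_bandProj_posPart_sub_apply_le (a b : E) :
    (1 - bandProj (a - b)⁺) a ≤ (1 - bandProj (a - b)⁺) b := by
  have h : (1 - bandProj (a - b)⁺) (a - b) ≤ 0 := by
    rw [LinearMap.sub_apply, Module.End.one_apply, bandProj_posPart_self]
    exact sub_nonpos.2 (le_posPart _)
  rwa [map_sub, sub_nonpos] at h

end BandProjection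

section OrderConvergence

variable {E : Type*} [ConditionallyCompleteLattice E] [AddCommGroup E] [IsOrderedAddMonoid E]

theorem nonpos_of_forall_nsmul_le_s4 {z x : E} (h : ∀ n : ℕ, n • z ≤ x) : z ≤ 0 := by
  have hb : BddAbove (Set.range fun n : ℕ => n • z) := ⟨x, by rintro _ ⟨n, rfl⟩; exact h n⟩
  refine (add_le_iff_nonpos_right (⨆ n : ℕ, n • z)).1 ?_
  rw [ciSup_add hb]
  exact ciSup_le fun n => by rw [← succ_nsmul]; exact le_ciSup hb (n + 1)

/-- The tail suprema `⨆ j ≥ n, q j` witness the order convergence. -/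
theorem orderConvergesTo_zero_of_eventually_le {q : ℕ → E} (hq : ∀ n, 0 ≤ q n)
    (hbdd : BddAbove (Set.range q))
    (h : ∀ ℓ : E, (∀ b, (∀ᶠ n in atTop, q n ≤ b) → ℓ ≤ b) → ℓ ≤ 0) :
    OrderConvergesTo q 0 := by
  have hb : ∀ n, BddAbove (q '' Set.Ici n) := fun n => hbdd.mono (Set.image_subset_range _ _)
  have hne : ∀ n, (q '' Set.Ici n).Nonempty := fun n => ⟨q n, n, Set.self_mem_Ici, rfl⟩
  have hqw : ∀ n, q n ≤ sSup (q '' Set.Ici n) := fun n =>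
    le_csSup (hb n) ⟨n, Set.self_mem_Ici, rfl⟩
  refine ⟨fun n => sSup (q '' Set.Ici n),
    fun a b hab => csSup_le_csSup (hb a) (hne b) (Set.image_mono (Set.Ici_subset_Ici.2 hab)),
    ⟨?_, fun ℓ hℓ => h ℓ fun b hqb => ?_⟩, fun n => ?_⟩
  · rintro _ ⟨n, rfl⟩
    exact (hq n).trans (hqw n)
  · obtain ⟨n, hn⟩ := eventually_atTop.1 hqb
    exact (hℓ ⟨n, rfl⟩).trans (csSup_le (hne n) (by rintro _ ⟨j, hj, rfl⟩; exact hn j hj))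
  · rw [sub_zero, abs_of_nonneg (hq n)]
    exact hqw n

variable [Module ℝ E] [PosSMulMono ℝ E]

theorem le_of_forall_le_add_inv_smul {x a ℓ : E} (hx : 0 ≤ x)
    (h : ∀ N : ℕ, 0 < N → ℓ ≤ a + (N : ℝ)⁻¹ • x) : ℓ ≤ a := by
  refine sub_nonpos.1 ((le_posPart _).trans (nonpos_of_forall_nsmul_le_s4 (x := x) fun N => ?_))
  rcases N.eq_zero_or_pos with rfl | hN
  · simpa using hx
  rw [← Nat.cast_smul_eq_nsmul ℝ, ← le_inv_smul_iff_of_pos (Nat.cast_pos.2 hN)]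
  exact sup_le (sub_le_iff_le_add'.2 (h N hN)) (smul_nonneg (by positivity) hx)

theorem le_of_forall_le_add_smul {y : ℕ → E} (hy : Antitone y) (hyinf : IsGLB (Set.range y) 0)
    {a ℓ : E} {c : ℝ} (hc : 0 < c) {K : ℕ} (h : ∀ n, K ≤ n → ℓ ≤ a + c • y n) : ℓ ≤ a := by
  have : c⁻¹ • (ℓ - a) ≤ 0 := hyinf.2 <| by
    rintro _ ⟨n, rfl⟩
    rw [inv_smul_le_iff_of_pos hc, sub_le_iff_le_add']
    exact (h _ (le_max_right n K)).trans
      (add_le_add_right (smul_le_smul_of_nonneg_left (hy (le_max_left n K)) hc.le) a)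
  rwa [inv_smul_le_iff_of_pos hc, smul_zero, sub_nonpos] at this

end OrderConvergence

theorem le_inv_add_pow_three_mul {r M : ℝ} (hr0 : 0 ≤ r) (hr1 : r ≤ 1) (hM : 0 < M) :
    r ≤ M⁻¹ + M ^ 3 * r ^ 3 := by
  rw [← mul_pow]
  rcases le_total (M * r) 1 with h | h
  · have : r ≤ M⁻¹ := by rw [← one_div, le_div_iff₀ hM]; linarith
    linarith [pow_nonneg (mul_nonneg hM.le hr0) 3]
  · linarith [one_le_pow₀ (n := 3) h, inv_nonneg.2 hM.le]

theorem sum_Ico_succ_div_pow_three_le {M : ℕ} (hM : 2 ≤ M) (j : ℕ) :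
    ∑ m ∈ Finset.Ico M j, ((m : ℝ) + 1) / (m : ℝ) ^ 3 ≤ 2 / ((M : ℝ) - 1) := by
  have hM' : (1 : ℝ) < M := by exact_mod_cast hM
  rcases le_total j M with hj | hj
  · rw [Finset.Ico_eq_empty_of_le hj, Finset.sum_empty]
    exact div_nonneg zero_le_two (by linarith)
  suffices h : ∑ m ∈ Finset.Ico M j, ((m : ℝ) + 1) / (m : ℝ) ^ 3 ≤
      2 / ((M : ℝ) - 1) - 2 / ((j : ℝ) - 1) by
    have hj' : (1 : ℝ) < j := hM'.trans_le (by exact_mod_cast hj)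
    linarith [div_nonneg zero_le_two (by linarith : (0 : ℝ) ≤ j - 1)]
  induction j, hj using Nat.le_induction with
  | base => simp
  | succ j hMj ih =>
    have hj : (2 : ℝ) ≤ j := by exact_mod_cast hM.trans hMj
    rw [Finset.sum_Ico_succ_top hMj]
    have hstep : ((j : ℝ) + 1) / (j : ℝ) ^ 3 ≤ 2 / ((j : ℝ) - 1) - 2 / ((j + 1 : ℕ) - 1 : ℝ) := by
      push_cast
      rw [add_sub_cancel_right, div_sub_div _ _ (by linarith) (by linarith),
        div_le_div_iff₀ (by positivity) (by nlinarith)]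
      nlinarith [pow_pos (by linarith : (0 : ℝ) < j) 3, sq_nonneg (j : ℝ)]
    linarith

namespace KoopmanVonNeumann

section Threshold

variable {E : Type*} [ConditionallyCompleteLattice E] [AddCommGroup E] [Module ℝ E]

noncomputable def threshold (e : E) (y : ℕ → E) (k : ℕ) : E :=
  (Finset.Icc 1 (k + 1)).inf' (Finset.nonempty_Icc.2 (Nat.le_add_left 1 k))
    fun M => (M : ℝ)⁻¹ • e + ((M : ℝ) ^ 3) • y k

theorem threshold_le {e : E} {y : ℕ → E} {M k : ℕ} (hM : 1 ≤ M) (hMk : M ≤ k + 1) :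
    threshold e y k ≤ (M : ℝ)⁻¹ • e + ((M : ℝ) ^ 3) • y k :=
  Finset.inf'_le _ (Finset.mem_Icc.2 ⟨hM, hMk⟩)

end Threshold

variable {E : Type*} [ConditionallyCompleteLattice E] [AddCommGroup E] [IsOrderedAddMonoid E]
  [Module ℝ E] [PosSMulMono ℝ E]

section Construction

variable (e : E) (y f : ℕ → E)

/-- The projection onto the band where `y k > M⁻³ e`. -/
noncomputable def levelProj (M k : ℕ) : Module.End ℝ E :=
  bandProj (y k - ((M : ℝ) ^ 3)⁻¹ • e)⁺

/-- The projection onto the band where `(m + 1)⁻³ e < y k ≤ m⁻³ e`. -/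
noncomputable def layerProj (m k : ℕ) : Module.End ℝ E :=
  levelProj e y (m + 1) k * (1 - levelProj e y m k)

noncomputable def excessProj (k : ℕ) : Module.End ℝ E :=
  bandProj (f k - (y k + threshold e y k))⁺

end Construction

variable {e : E} {y f : ℕ → E}

theorem inv_succ_smul_le_threshold (he : 0 ≤ e) (hy0 : ∀ n, 0 ≤ y n) (k : ℕ) :
    ((k : ℝ) + 1)⁻¹ • e ≤ threshold e y k := by
  refine Finset.le_inf' _ _ fun M hM => ?_
  obtain ⟨hM1, hMk⟩ := Finset.mem_Icc.1 hM
  have hM0 : (0 : ℝ) < M := by exact_mod_cast hM1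
  refine le_add_of_le_of_nonneg (smul_le_smul_of_nonneg_right ?_ he)
    (smul_nonneg (by positivity) (hy0 k))
  exact inv_anti₀ hM0 (by exact_mod_cast hMk)

theorem threshold_nonneg (he : 0 ≤ e) (hy0 : ∀ n, 0 ≤ y n) (k : ℕ) : 0 ≤ threshold e y k :=
  (smul_nonneg (by positivity) he).trans (inv_succ_smul_le_threshold he hy0 k)

theorem le_succ_smul_of_sum_range_le (hf : ∀ n, 0 ≤ f n) (hy : Antitone y)
    (hS : ∀ n, ∑ k ∈ Finset.range n, f k ≤ (n : ℝ) • y n) (k : ℕ) : f k ≤ ((k : ℝ) + 1) • y k :=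
  calc f k ≤ ∑ i ∈ Finset.range (k + 1), f i :=
        Finset.single_le_sum (fun i _ => hf i) (Finset.self_mem_range_succ k)
    _ ≤ ((k + 1 : ℕ) : ℝ) • y (k + 1) := hS (k + 1)
    _ ≤ ((k : ℝ) + 1) • y k := by
        push_cast
        exact smul_le_smul_of_nonneg_left (hy k.le_succ) (by positivity)

theorem isBandProjection_levelProj (M k : ℕ) : IsBandProjection (levelProj e y M k) :=
  isBandProjection_bandProj (posPart_nonneg _)

theorem isBandProjection_excessProj (k : ℕ) : IsBandProjection (excessProj e y f k) :=
  isBandProjection_bandProj (posPart_nonneg _)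

theorem levelProj_succ_mul_levelProj (he : 0 ≤ e) {m : ℕ} (hm : 1 ≤ m) (k : ℕ) :
    levelProj e y (m + 1) k * levelProj e y m k = levelProj e y m k := by
  refine bandProj_mul_bandProj_of_le (posPart_nonneg _) (posPart_mono (sub_le_sub_left
    (smul_le_smul_of_nonneg_right (inv_anti₀ (by positivity) ?_) he) _))
  exact pow_le_pow_left₀ (Nat.cast_nonneg m) (by push_cast; linarith) 3

theorem levelProj_apply_le_of_le (hy : Antitone y) (m : ℕ) {k j : ℕ} (hkj : k ≤ j) {x : E}
    (hx : 0 ≤ x) : levelProj e y m j x ≤ levelProj e y m k x :=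
  bandProj_apply_le_of_le (posPart_nonneg _) (posPart_mono (sub_le_sub_right (hy hkj) _)) hx

theorem levelProj_apply_le {M : ℕ} (hM : 1 ≤ M) (k : ℕ) (hyk : 0 ≤ y k) :
    levelProj e y M k e ≤ ((M : ℝ) ^ 3) • y k := by
  have h := bandProj_posPart_sub_apply_le (y k) (((M : ℝ) ^ 3)⁻¹ • e)
  rw [map_smul] at h
  rw [← inv_inv ((M : ℝ) ^ 3), le_inv_smul_iff_of_pos (by positivity)]
  exact h.trans ((isBandProjection_levelProj M k).2 _ hyk).2

theorem one_sub_levelProj_apply_le (M k : ℕ) :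
    (1 - levelProj e y M k) (y k) ≤ ((M : ℝ) ^ 3)⁻¹ • (1 - levelProj e y M k) e := by
  rw [← map_smul]
  exact one_sub_bandProj_posPart_sub_apply_le _ _

theorem isBandProjection_layerProj (m k : ℕ) : IsBandProjection (layerProj e y m k) :=
  (isBandProjection_levelProj _ _).mul (isBandProjection_levelProj _ _).one_sub

theorem layerProj_apply (he : 0 ≤ e) {m : ℕ} (hm : 1 ≤ m) (k : ℕ) (x : E) :
    layerProj e y m k x = levelProj e y (m + 1) k x - levelProj e y m k x := by
  rw [layerProj, mul_sub, mul_one, levelProj_succ_mul_levelProj he hm k, LinearMap.sub_apply]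

theorem smul_layerProj_apply_le (m k : ℕ) :
    ((m : ℝ) + 1)⁻¹ ^ 3 • layerProj e y m k e ≤ layerProj e y m k (y k) := by
  have hcomm := LinearMap.congr_fun
    ((isBandProjection_levelProj (e := e) (y := y) (m + 1) k).commute
      (isBandProjection_levelProj (e := e) (y := y) m k).one_sub)
  have hL : levelProj e y (m + 1) k (y k - ((m : ℝ) + 1)⁻¹ ^ 3 • e) =
      (y k - ((m : ℝ) + 1)⁻¹ ^ 3 • e)⁺ := by
    rw [inv_pow, ← Nat.cast_succ]
    exact bandProj_posPart_self _
  have h : 0 ≤ layerProj e y m k (y k - ((m : ℝ) + 1)⁻¹ ^ 3 • e) := by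
    rw [layerProj, hcomm, Module.End.mul_apply, hL]
    exact ((isBandProjection_levelProj m k).one_sub.2 _ (posPart_nonneg _)).1
  rwa [map_sub, map_smul, sub_nonneg] at h

theorem inv_succ_smul_layerProj_apply_le (he : 0 ≤ e) (m k : ℕ) :
    ((m : ℝ) + 1)⁻¹ • layerProj e y m k e ≤ layerProj e y m k (threshold e y k) := by
  have hQ := isBandProjection_layerProj (e := e) (y := y) m k
  rw [threshold, Finset.apply_inf'_eq_inf'_comp _ _ hQ.isPosLeId.map_inf]
  refine Finset.le_inf' _ _ fun M hM => ?_
  have hM0 : (0 : ℝ) < M := by exact_mod_cast (Finset.mem_Icc.1 hM).1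
  simp only [Function.comp_apply, map_add, map_smul]
  calc ((m : ℝ) + 1)⁻¹ • layerProj e y m k e
      ≤ ((M : ℝ)⁻¹ + (M : ℝ) ^ 3 * ((m : ℝ) + 1)⁻¹ ^ 3) • layerProj e y m k e :=
        smul_le_smul_of_nonneg_right (le_inv_add_pow_three_mul (by positivity)
          (inv_le_one_of_one_le₀ (by simp)) hM0) (hQ.2 e he).1
    _ ≤ (M : ℝ)⁻¹ • layerProj e y m k e + ((M : ℝ) ^ 3) • layerProj e y m k (y k) := by
        rw [add_smul, mul_smul]
        exact add_le_add_right (smul_le_smul_of_nonneg_left (smul_layerProj_apply_le m k)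
          (by positivity)) _

theorem one_sub_excessProj_apply_le (he : 0 ≤ e) (hy0 : ∀ n, 0 ≤ y n) (k : ℕ) :
    (1 - excessProj e y f k) (f k) ≤ y k + threshold e y k :=
  (one_sub_bandProj_posPart_sub_apply_le _ _).trans
    ((isBandProjection_excessProj k).one_sub.2 _
      (add_nonneg (hy0 k) (threshold_nonneg he hy0 k))).2

theorem excessProj_apply_threshold_le (hy0 : ∀ n, 0 ≤ y n) (hf : ∀ n, 0 ≤ f n) (k : ℕ) :
    excessProj e y f k (threshold e y k) ≤ f k :=
  calc excessProj e y f k (threshold e y k) ≤ excessProj e y f k (y k + threshold e y k) :=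
        (isBandProjection_excessProj k).isPosLeId.monotone (le_add_of_nonneg_left (hy0 k))
    _ ≤ excessProj e y f k (f k) := bandProj_posPart_sub_apply_le _ _
    _ ≤ f k := ((isBandProjection_excessProj k).2 _ (hf k)).2

end KoopmanVonNeumann

namespace KoopmanVonNeumann

variable {E : Type*} [ConditionallyCompleteLattice E] [AddCommGroup E] [IsOrderedAddMonoid E]
  [Module ℝ E] [PosSMulMono ℝ E] {e : E} {y f : ℕ → E}

/-- Off the band `y k > (k + 1)⁻³ e` one has `f k ≤ (k + 1) y k ≤ (k + 1)⁻¹ e ≤ threshold e y k`,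
so the generator of `excessProj k` lies in that band. -/
theorem levelProj_succ_mul_excessProj (he : 0 ≤ e) (hy0 : ∀ n, 0 ≤ y n) (hy : Antitone y)
    (hf : ∀ n, 0 ≤ f n) (hS : ∀ n, ∑ k ∈ Finset.range n, f k ≤ (n : ℝ) • y n) (k : ℕ) :
    levelProj e y (k + 1) k * excessProj e y f k = excessProj e y f k := by
  set L := levelProj e y (k + 1) k
  have hL : IsBandProjection (1 - L) := (isBandProjection_levelProj _ _).one_sub
  set N : ℝ := (k : ℝ) + 1
  have hLf : (1 - L) (f k) ≤ N • (1 - L) (y k) := by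
    rw [← map_smul]
    exact hL.isPosLeId.monotone (le_succ_smul_of_sum_range_le hf hy hS k)
  have hLy : (1 - L) (y k) ≤ (N ^ 3)⁻¹ • (1 - L) e := by
    simpa [N] using one_sub_levelProj_apply_le (e := e) (y := y) (k + 1) k
  have hLt : N⁻¹ • (1 - L) e ≤ (1 - L) (threshold e y k) := by
    rw [← map_smul]
    exact hL.isPosLeId.monotone (inv_succ_smul_le_threshold he hy0 k)
  have hcoef : N * (N ^ 3)⁻¹ - N⁻¹ ≤ 0 := by
    rw [show N * (N ^ 3)⁻¹ = (N ^ 2)⁻¹ by field_simp, sub_nonpos]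
    exact inv_anti₀ (by positivity) (by nlinarith [show (1 : ℝ) ≤ N by simp [N]])
  have hd : (1 - L) (f k - (y k + threshold e y k)) ≤ 0 :=
    calc (1 - L) (f k - (y k + threshold e y k))
        = (1 - L) (f k) - (1 - L) (y k) - (1 - L) (threshold e y k) := by
          rw [map_sub, map_add, sub_add_eq_sub_sub]
      _ ≤ N • ((N ^ 3)⁻¹ • (1 - L) e) - 0 - N⁻¹ • (1 - L) e :=
          sub_le_sub (sub_le_sub (hLf.trans (smul_le_smul_of_nonneg_left hLy (by positivity)))
            (hL.2 _ (hy0 k)).1) hLt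
      _ = (N * (N ^ 3)⁻¹ - N⁻¹) • (1 - L) e := by rw [sub_zero, smul_smul, sub_smul]
      _ ≤ 0 := smul_nonpos_of_nonpos_of_nonneg hcoef (hL.2 e he).1
  refine (isBandProjection_levelProj _ _).isPosLeId.mul_bandProj (posPart_nonneg _) ?_
  have h := hL.isPosLeId.map_posPart (f k - (y k + threshold e y k))
  rw [posPart_eq_zero.2 hd, LinearMap.sub_apply, Module.End.one_apply, sub_eq_zero] at h
  exact h.symm

/-- On the `m`-th layer the threshold is at least `(m + 1)⁻¹ e`, and `excessProj k` only sees
where `f k` exceeds it. -/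
theorem layerProj_excessProj_apply_le (he : 0 ≤ e) (hy0 : ∀ n, 0 ≤ y n) (hf : ∀ n, 0 ≤ f n)
    (m k : ℕ) :
    layerProj e y m k (excessProj e y f k e) ≤ ((m : ℝ) + 1) • (1 - levelProj e y m k) (f k) := by
  set Q := layerProj e y m k
  set P := excessProj e y f k
  have hQ : IsBandProjection Q := isBandProjection_layerProj m k
  have hP : IsBandProjection P := isBandProjection_excessProj k
  have hcomm : ∀ x, Q (P x) = P (Q x) := LinearMap.congr_fun (hQ.commute hP)
  have hQe : Q e ≤ ((m : ℝ) + 1) • Q (threshold e y k) :=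
    (inv_smul_le_iff_of_pos (by positivity)).1 (inv_succ_smul_layerProj_apply_le he m k)
  calc Q (P e) = P (Q e) := hcomm e
    _ ≤ P (((m : ℝ) + 1) • Q (threshold e y k)) := hP.isPosLeId.monotone hQe
    _ = ((m : ℝ) + 1) • Q (P (threshold e y k)) := by rw [map_smul, hcomm]
    _ ≤ ((m : ℝ) + 1) • Q (f k) := smul_le_smul_of_nonneg_left
        (hQ.isPosLeId.monotone (excessProj_apply_threshold_le hy0 hf k)) (by positivity)
    _ ≤ ((m : ℝ) + 1) • (1 - levelProj e y m k) (f k) := smul_le_smul_of_nonneg_left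
        ((isBandProjection_levelProj _ _).2 _
          ((isBandProjection_levelProj m k).one_sub.2 _ (hf k)).1).2 (by positivity)

theorem excessProj_apply_le (he : 0 ≤ e) (hy0 : ∀ n, 0 ≤ y n) (hy : Antitone y)
    (hf : ∀ n, 0 ≤ f n) (hS : ∀ n, ∑ k ∈ Finset.range n, f k ≤ (n : ℝ) • y n)
    {M k : ℕ} (hM : 1 ≤ M) (hMk : M ≤ k + 1) :
    excessProj e y f k e ≤ ((M : ℝ) ^ 3) • y k +
      ∑ m ∈ Finset.Ico M (k + 1), ((m : ℝ) + 1) • (1 - levelProj e y m k) (f k) := by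
  set x := excessProj e y f k e
  have htop : levelProj e y (k + 1) k x = x :=
    LinearMap.congr_fun (levelProj_succ_mul_excessProj he hy0 hy hf hS k) e
  have htel := Finset.sum_Ico_sub (fun m => levelProj e y m k x) hMk
  rw [htop] at htel
  rw [← sub_add_cancel x (levelProj e y M k x), ← htel, add_comm]
  refine add_le_add ?_ (Finset.sum_le_sum fun m hm => ?_)
  · exact ((isBandProjection_levelProj M k).isPosLeId.monotone
      ((isBandProjection_excessProj k).2 e he).2).trans (levelProj_apply_le hM k (hy0 k))
  · rw [← layerProj_apply he (hM.trans (Finset.mem_Ico.1 hm).1)]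
    exact layerProj_excessProj_apply_le he hy0 hf m k

theorem excessProj_apply_le_of_le (he : 0 ≤ e) (hy0 : ∀ n, 0 ≤ y n) (hy : Antitone y)
    (hf : ∀ n, 0 ≤ f n) (hS : ∀ n, ∑ k ∈ Finset.range n, f k ≤ (n : ℝ) • y n)
    {M n₀ k j : ℕ} (hM : 1 ≤ M) (hMn : M ≤ n₀) (hnk : n₀ ≤ k) (hkj : k < j) :
    excessProj e y f k e ≤ ((M : ℝ) ^ 3) • y n₀ +
      ∑ m ∈ Finset.Ico M j, ((m : ℝ) + 1) • (1 - levelProj e y m j) (f k) := by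
  refine (excessProj_apply_le he hy0 hy hf hS hM (by omega)).trans (add_le_add ?_ ?_)
  · exact smul_le_smul_of_nonneg_left (hy hnk) (by positivity)
  refine (Finset.sum_le_sum fun m _ => smul_le_smul_of_nonneg_left ?_ (by positivity)).trans
    (Finset.sum_le_sum_of_subset_of_nonneg (Finset.Ico_subset_Ico_right hkj) fun m _ _ =>
      smul_nonneg (by positivity) ((isBandProjection_levelProj m j).one_sub.2 _ (hf k)).1)
  simp only [LinearMap.sub_apply, Module.End.one_apply]
  exact sub_le_sub_left (levelProj_apply_le_of_le hy m hkj.le (hf k)) _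

theorem sum_Ico_one_sub_levelProj_le (he : 0 ≤ e) (hf : ∀ n, 0 ≤ f n)
    (hS : ∀ n, ∑ k ∈ Finset.range n, f k ≤ (n : ℝ) • y n) (m n₀ j : ℕ) :
    ∑ k ∈ Finset.Ico n₀ j, (1 - levelProj e y m j) (f k) ≤ ((j : ℝ) * ((m : ℝ) ^ 3)⁻¹) • e := by
  have hL := (isBandProjection_levelProj (e := e) (y := y) m j).one_sub
  calc ∑ k ∈ Finset.Ico n₀ j, (1 - levelProj e y m j) (f k)
      = (1 - levelProj e y m j) (∑ k ∈ Finset.Ico n₀ j, f k) := (map_sum _ _ _).symm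
    _ ≤ (1 - levelProj e y m j) ((j : ℝ) • y j) := hL.isPosLeId.monotone <|
        (Finset.sum_le_sum_of_subset_of_nonneg
          (fun k hk => Finset.mem_range.2 (Finset.mem_Ico.1 hk).2) fun k _ _ => hf k).trans (hS j)
    _ ≤ (j : ℝ) • (((m : ℝ) ^ 3)⁻¹ • e) := by
        rw [map_smul]
        refine smul_le_smul_of_nonneg_left ((one_sub_levelProj_apply_le m j).trans ?_)
          j.cast_nonneg
        exact smul_le_smul_of_nonneg_left (hL.2 e he).2 (by positivity)
    _ = ((j : ℝ) * ((m : ℝ) ^ 3)⁻¹) • e := smul_smul _ _ _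

theorem sum_range_excessProj_apply_le (he : 0 ≤ e) (n : ℕ) :
    ∑ k ∈ Finset.range n, excessProj e y f k e ≤ (n : ℝ) • e :=
  calc ∑ k ∈ Finset.range n, excessProj e y f k e ≤ ∑ _k ∈ Finset.range n, e :=
        Finset.sum_le_sum fun k _ => ((isBandProjection_excessProj k).2 e he).2
    _ = (n : ℝ) • e := by rw [Finset.sum_const, Finset.card_range, Nat.cast_smul_eq_nsmul]

theorem sum_Ico_excessProj_apply_le (he : 0 ≤ e) (hy0 : ∀ n, 0 ≤ y n) (hy : Antitone y)
    (hf : ∀ n, 0 ≤ f n) (hS : ∀ n, ∑ k ∈ Finset.range n, f k ≤ (n : ℝ) • y n)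
    {M n₀ j : ℕ} (hM : 2 ≤ M) (hMn : M ≤ n₀) :
    ∑ k ∈ Finset.Ico n₀ j, excessProj e y f k e ≤
      (j : ℝ) • (((M : ℝ) ^ 3) • y n₀ + (2 / ((M : ℝ) - 1)) • e) := by
  calc ∑ k ∈ Finset.Ico n₀ j, excessProj e y f k e
      ≤ ∑ k ∈ Finset.Ico n₀ j, (((M : ℝ) ^ 3) • y n₀ +
          ∑ m ∈ Finset.Ico M j, ((m : ℝ) + 1) • (1 - levelProj e y m j) (f k)) :=
        Finset.sum_le_sum fun k hk => excessProj_apply_le_of_le he hy0 hy hf hS (by omega) hMn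
          (Finset.mem_Ico.1 hk).1 (Finset.mem_Ico.1 hk).2
    _ = (j - n₀) • (((M : ℝ) ^ 3) • y n₀) + ∑ m ∈ Finset.Ico M j, ((m : ℝ) + 1) •
          ∑ k ∈ Finset.Ico n₀ j, (1 - levelProj e y m j) (f k) := by
        rw [Finset.sum_add_distrib, Finset.sum_const, Nat.card_Ico, Finset.sum_comm]
        simp only [Finset.smul_sum]
    _ ≤ (j : ℝ) • (((M : ℝ) ^ 3) • y n₀) + ∑ m ∈ Finset.Ico M j, ((m : ℝ) + 1) •
          (((j : ℝ) * ((m : ℝ) ^ 3)⁻¹) • e) := by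
        refine add_le_add ?_ (Finset.sum_le_sum fun m _ => smul_le_smul_of_nonneg_left
          (sum_Ico_one_sub_levelProj_le he hf hS m n₀ j) (by positivity))
        rw [← Nat.cast_smul_eq_nsmul ℝ]
        exact smul_le_smul_of_nonneg_right (by exact_mod_cast Nat.sub_le j n₀)
          (smul_nonneg (by positivity) (hy0 n₀))
    _ = (j : ℝ) • (((M : ℝ) ^ 3) • y n₀) +
          ((j : ℝ) * ∑ m ∈ Finset.Ico M j, ((m : ℝ) + 1) / (m : ℝ) ^ 3) • e := by
        simp only [smul_smul, ← Finset.sum_smul, Finset.mul_sum]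
        congr 2
        exact Finset.sum_congr rfl fun m _ => by ring
    _ ≤ (j : ℝ) • (((M : ℝ) ^ 3) • y n₀ + (2 / ((M : ℝ) - 1)) • e) := by
        rw [smul_add, smul_smul (j : ℝ) (2 / ((M : ℝ) - 1))]
        exact add_le_add_right (smul_le_smul_of_nonneg_right (mul_le_mul_of_nonneg_left
          (sum_Ico_succ_div_pow_three_le hM j) j.cast_nonneg) he) _

theorem eventually_cesaro_excessProj_le (he : 0 ≤ e) (hy0 : ∀ n, 0 ≤ y n) (hy : Antitone y)
    (hf : ∀ n, 0 ≤ f n) (hS : ∀ n, ∑ k ∈ Finset.range n, f k ≤ (n : ℝ) • y n)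
    {M n₀ N : ℕ} (hM : 2 ≤ M) (hMn : M ≤ n₀) (hN : 0 < N) :
    ∀ᶠ j : ℕ in atTop, (j : ℝ)⁻¹ • ∑ k ∈ Finset.range j, excessProj e y f k e ≤
      (2 / ((M : ℝ) - 1)) • e + ((M : ℝ) ^ 3) • y n₀ + (N : ℝ)⁻¹ • e := by
  filter_upwards [eventually_ge_atTop (n₀ * N)] with j hj
  have hnj : n₀ ≤ j := (Nat.le_mul_of_pos_right n₀ hN).trans hj
  have hj : (n₀ : ℝ) ≤ j * (N : ℝ)⁻¹ := by
    rw [le_mul_inv_iff₀ (Nat.cast_pos.2 hN)]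
    exact_mod_cast hj
  rw [inv_smul_le_iff_of_pos (by exact_mod_cast (by omega : 0 < j)),
    ← Finset.sum_range_add_sum_Ico _ hnj]
  calc ∑ k ∈ Finset.range n₀, excessProj e y f k e + ∑ k ∈ Finset.Ico n₀ j, excessProj e y f k e
      ≤ ((j : ℝ) * (N : ℝ)⁻¹) • e + (j : ℝ) • (((M : ℝ) ^ 3) • y n₀ + (2 / ((M : ℝ) - 1)) • e) :=
        add_le_add ((sum_range_excessProj_apply_le he n₀).trans
          (smul_le_smul_of_nonneg_right hj he)) (sum_Ico_excessProj_apply_le he hy0 hy hf hS hM hMn)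
    _ = (j : ℝ) • ((2 / ((M : ℝ) - 1)) • e + ((M : ℝ) ^ 3) • y n₀ + (N : ℝ)⁻¹ • e) := by
        rw [smul_add _ _ ((N : ℝ)⁻¹ • e), smul_smul, add_comm ((2 / ((M : ℝ) - 1)) • e), add_comm]

theorem orderConvergesTo_cesaro_excessProj (he : 0 ≤ e) (hy : Antitone y)
    (hyinf : IsGLB (Set.range y) 0) (hf : ∀ n, 0 ≤ f n)
    (hS : ∀ n, ∑ k ∈ Finset.range n, f k ≤ (n : ℝ) • y n) :
    OrderConvergesTo (fun n => (n : ℝ)⁻¹ • ∑ k ∈ Finset.range n, excessProj e y f k e) 0 := by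
  have hy0 : ∀ n, 0 ≤ y n := fun n => hyinf.1 ⟨n, rfl⟩
  refine orderConvergesTo_zero_of_eventually_le (fun n => smul_nonneg (by positivity)
    (Finset.sum_nonneg fun k _ => ((isBandProjection_excessProj k).2 e he).1)) ⟨e, ?_⟩
    fun ℓ hℓ => ?_
  · rintro _ ⟨n, rfl⟩
    rcases n.eq_zero_or_pos with rfl | hn
    · simpa using he
    exact (inv_smul_le_iff_of_pos (Nat.cast_pos.2 hn)).2 (sum_range_excessProj_apply_le he n)
  have hM : ∀ M : ℕ, 2 ≤ M → ℓ ≤ (2 / ((M : ℝ) - 1)) • e := fun M hM =>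
    le_of_forall_le_add_smul hy hyinf (pow_pos (Nat.cast_pos.2 (by omega : 0 < M)) 3)
      fun n₀ hMn => le_of_forall_le_add_inv_smul he fun N hN =>
        hℓ _ (eventually_cesaro_excessProj_le he hy0 hy hf hS hM hMn hN)
  refine le_of_forall_le_add_inv_smul he fun N hN => ?_
  have h2 : (2 : ℝ) / (((2 * N + 1 : ℕ) : ℝ) - 1) = (N : ℝ)⁻¹ := by
    push_cast
    rw [add_sub_cancel_right, div_mul_cancel_left₀ two_ne_zero]
  rw [zero_add, ← h2]
  exact hM (2 * N + 1) (by omega)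

theorem orderConvergesTo_one_sub_excessProj (he : 0 ≤ e) (hy : Antitone y)
    (hyinf : IsGLB (Set.range y) 0) (hf : ∀ n, 0 ≤ f n) :
    OrderConvergesTo (fun n => (1 - excessProj e y f n) (f n)) 0 := by
  have hy0 : ∀ n, 0 ≤ y n := fun n => hyinf.1 ⟨n, rfl⟩
  have hbound : ∀ {M n₀ n : ℕ}, 1 ≤ M → M ≤ n + 1 → n₀ ≤ n →
      (1 - excessProj e y f n) (f n) ≤ (M : ℝ)⁻¹ • e + (1 + (M : ℝ) ^ 3) • y n₀ := by
    intro M n₀ n hM hMn hn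
    refine (one_sub_excessProj_apply_le he hy0 n).trans ?_
    rw [add_smul, one_smul, add_left_comm]
    exact add_le_add (hy hn) ((threshold_le hM hMn).trans (add_le_add_right
      (smul_le_smul_of_nonneg_left (hy hn) (by positivity)) _))
  refine orderConvergesTo_zero_of_eventually_le
    (fun n => ((isBandProjection_excessProj n).one_sub.2 _ (hf n)).1)
    ⟨((1 : ℕ) : ℝ)⁻¹ • e + (1 + ((1 : ℕ) : ℝ) ^ 3) • y 0, ?_⟩ fun ℓ hℓ => ?_
  · rintro _ ⟨n, rfl⟩
    exact hbound le_rfl (Nat.le_add_left 1 n) n.zero_le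
  refine le_of_forall_le_add_inv_smul he fun M hM => ?_
  refine le_of_forall_le_add_smul hy hyinf (c := 1 + (M : ℝ) ^ 3) (by positivity) (K := M)
    fun n₀ hMn => hℓ _ ?_
  filter_upwards [eventually_ge_atTop n₀] with n hn
  rw [zero_add]
  exact hbound hM (by omega) hn

end KoopmanVonNeumann

open KoopmanVonNeumann in
theorem stmt4_general {E : Type*} [ConditionallyCompleteLattice E] [AddCommGroup E]
    [CovariantClass E E (· + ·) (· ≤ ·)] [Module ℝ E] [PosSMulMono ℝ E]
    (e : E) (he : IsWeakOrderUnit e) (f : ℕ → E)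
    (hf : ∀ n, 0 ≤ f n)
    (hconv : OrderConvergesTo (fun n => (n : ℝ)⁻¹ • ∑ k ∈ Finset.range n, f k) 0) :
    ∃ P : ℕ → Module.End ℝ E, (∀ n, IsBandProjection (P n)) ∧
      OrderConvergesTo (fun n => (n : ℝ)⁻¹ • ∑ k ∈ Finset.range n, P k e) 0 ∧
      OrderConvergesTo (fun n => (1 - P n) (f n)) 0 := by
  have : IsOrderedAddMonoid E := { add_le_add_left := fun _ _ h c => add_le_add_left h c }
  obtain ⟨y, hy, hyinf, hdom⟩ := hconv
  have hS : ∀ n, ∑ k ∈ Finset.range n, f k ≤ (n : ℝ) • y n := fun n => by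
    rcases n.eq_zero_or_pos with rfl | hn
    · simp
    refine (inv_smul_le_iff_of_pos (Nat.cast_pos.2 hn)).1 ((le_abs_self _).trans ?_)
    simpa using hdom n
  exact ⟨excessProj e y f, isBandProjection_excessProj,
    orderConvergesTo_cesaro_excessProj he.1.le hy hyinf hf hS,
    orderConvergesTo_one_sub_excessProj he.1.le hy hyinf hf⟩

/-- Necessity part of the Koopman-von Neumann theorem in Riesz spaces. -/
theorem stmt4 {E : Type*} [ConditionallyCompleteLattice E] [AddCommGroup E]
    [CovariantClass E E (· + ·) (· ≤ ·)] [Module ℝ E] [PosSMulMono ℝ E]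
    (e : E) (he : IsWeakOrderUnit e) (f : ℕ → E) (g : E)
    (hf : ∀ n, 0 ≤ f n) (hbd : ∀ n, f n ≤ g)
    (hconv : OrderConvergesTo (fun n => (n : ℝ)⁻¹ • ∑ k ∈ Finset.range n, f k) 0) :
    ∃ P : ℕ → Module.End ℝ E, (∀ n, IsBandProjection (P n)) ∧
      OrderConvergesTo (fun n => (n : ℝ)⁻¹ • ∑ k ∈ Finset.range n, P k e) 0 ∧
      OrderConvergesTo (fun n => (1 - P n) (f n)) 0 :=
  stmt4_general e he f hf hconv
end

section
/- For p > 2, define g^p_j = n if j = ⌊n^p⌋ for some n ∈ ℕ, and g^p_j = 0 otherwise. Then the sequence (g^p_j) is unbounded, the set N = {⌊n^p⌋ : n ∈ ℕ} has density zero, g^p_j = 0 for j ∉ N, and the Cesàro means (1/n) ∑_{k=0}^{n-1} g^p_k converge to 0 as n → ∞. -/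
open Filter Finset

/-- A set `N ⊆ ℕ` has density zero. -/
def HasDensityZero (N : Set ℕ) : Prop :=
  Tendsto (fun n => (∑ k ∈ Finset.range n, Set.indicator N (fun _ => (1 : ℝ)) k) / n)
    atTop (nhds 0)

/-- The sequence `g^p`: `g^p j = n` when `j = ⌊n^p⌋`, and `0` otherwise. -/
noncomputable def gp (p : ℝ) (j : ℕ) : ℕ := sSup {n : ℕ | ⌊(n : ℝ) ^ p⌋ = (j : ℤ)}

/-!
Everything is controlled by `M n = ⌊n^(1/p)⌋₊`: a floor `⌊m^p⌋` below `n` forces `m ≤ M n`.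
Hence the range `[0, n)` meets `N = {⌊m^p⌋}` in at most `M n + 1` points, and `g^p ≤ M n` there,
so both the counting function of `N` and the partial sums of `g^p` are `O((M n + 1)^2) = O(n^(2/p))`,
which is `o(n)` since `p > 2`. Unboundedness holds because `m` itself lies in the set whose
supremum defines `g^p ⌊m^p⌋`.
-/

def floorPowSet (p : ℝ) : Set ℕ := {j : ℕ | ∃ n : ℕ, (j : ℤ) = ⌊(n : ℝ) ^ p⌋}

section

variable {p : ℝ}

lemma le_floor_rpow_inv_of_floor_rpow_lt (hp : 0 < p) {m n : ℕ} (h : ⌊(m : ℝ) ^ p⌋ < n) :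
    m ≤ ⌊(n : ℝ) ^ p⁻¹⌋₊ := by
  rw [Int.floor_lt, Int.cast_natCast] at h
  exact Nat.le_floor ((Real.lt_rpow_inv_iff_of_pos (by positivity) (by positivity) hp).2 h).le

lemma gp_le_floor_rpow_inv (hp : 0 < p) {k n : ℕ} (hk : k < n) : gp p k ≤ ⌊(n : ℝ) ^ p⁻¹⌋₊ :=
  csSup_le' fun m hm => le_floor_rpow_inv_of_floor_rpow_lt hp (by rw [hm]; exact_mod_cast hk)

lemma le_gp_floor_rpow (hp : 0 < p) (m : ℕ) : m ≤ gp p ⌊(m : ℝ) ^ p⌋.toNat := by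
  set j := ⌊(m : ℝ) ^ p⌋.toNat
  have hj : ((j : ℕ) : ℤ) = ⌊(m : ℝ) ^ p⌋ := Int.toNat_of_nonneg (Int.floor_nonneg.2 (by positivity))
  refine le_csSup ⟨⌊((j + 1 : ℕ) : ℝ) ^ p⁻¹⌋₊, fun n (hn : ⌊(n : ℝ) ^ p⌋ = j) => ?_⟩
    hj.symm
  refine le_floor_rpow_inv_of_floor_rpow_lt hp ?_
  rw [hn]
  exact_mod_cast j.lt_succ_self

lemma gp_eq_zero_of_notMem {j : ℕ} (hj : j ∉ floorPowSet p) : gp p j = 0 := by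
  have hempty : {n : ℕ | ⌊(n : ℝ) ^ p⌋ = (j : ℤ)} = ∅ :=
    Set.eq_empty_of_forall_notMem fun n hn => hj ⟨n, hn.symm⟩
  rw [gp, hempty, csSup_empty, bot_eq_zero]

open Classical in
lemma card_range_filter_mem_floorPowSet_le (hp : 0 < p) (n : ℕ) :
    #{k ∈ range n | k ∈ floorPowSet p} ≤ ⌊(n : ℝ) ^ p⁻¹⌋₊ + 1 := by
  calc #{k ∈ range n | k ∈ floorPowSet p}
      ≤ #((range (⌊(n : ℝ) ^ p⁻¹⌋₊ + 1)).image fun m : ℕ => ⌊(m : ℝ) ^ p⌋.toNat) := by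
        refine card_le_card fun k hk => ?_
        obtain ⟨hkn, m, hm⟩ := mem_filter.1 hk
        refine mem_image.2 ⟨m, mem_range_succ_iff.2 ?_, by rw [← hm, Int.toNat_natCast]⟩
        exact le_floor_rpow_inv_of_floor_rpow_lt hp (hm ▸ by exact_mod_cast mem_range.1 hkn)
    _ ≤ ⌊(n : ℝ) ^ p⁻¹⌋₊ + 1 := card_image_le.trans (card_range _).le

lemma sum_range_le_of_support_subset_floorPowSet (hp : 0 < p) {f : ℕ → ℝ} {n : ℕ} {c : ℝ}
    (hc : 0 ≤ c) (hf : ∀ k ∉ floorPowSet p, f k = 0) (hfc : ∀ k < n, f k ≤ c) :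
    ∑ k ∈ range n, f k ≤ (⌊(n : ℝ) ^ p⁻¹⌋₊ + 1) * c := by
  classical
  rw [← sum_filter_of_ne (p := (· ∈ floorPowSet p)) fun k _ hk => not_imp_comm.1 (hf k) hk]
  calc ∑ k ∈ range n with k ∈ floorPowSet p, f k
      ≤ #{k ∈ range n | k ∈ floorPowSet p} • c :=
        sum_le_card_nsmul _ _ _ fun k hk => hfc k (mem_range.1 (mem_filter.1 hk).1)
    _ ≤ (⌊(n : ℝ) ^ p⁻¹⌋₊ + 1) * c := by
        rw [nsmul_eq_mul]
        gcongr
        exact_mod_cast card_range_filter_mem_floorPowSet_le hp n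

lemma tendsto_floor_rpow_inv_add_one_sq_div (hp : 2 < p) :
    Tendsto (fun n : ℕ => ((⌊(n : ℝ) ^ p⁻¹⌋₊ : ℝ) + 1) ^ 2 / n) atTop (nhds 0) := by
  have hp0 : 0 < p := by linarith
  have hexp : 0 < 1 - 2 * p⁻¹ := by
    have : p⁻¹ < 2⁻¹ := inv_strictAnti₀ two_pos hp
    linarith
  have hlim : Tendsto (fun n : ℕ => 4 * (n : ℝ) ^ (2 * p⁻¹ - 1)) atTop (nhds 0) := by
    simpa [neg_sub] using ((tendsto_rpow_neg_atTop hexp).comp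
      tendsto_natCast_atTop_atTop).const_mul 4
  refine squeeze_zero' (Eventually.of_forall fun n => by positivity) ?_ hlim
  filter_upwards [eventually_ge_atTop 1] with n hn
  have hn1 : (1 : ℝ) ≤ n := by exact_mod_cast hn
  have hroot : 1 ≤ (n : ℝ) ^ p⁻¹ := Real.one_le_rpow hn1 (by positivity)
  have hfloor : (⌊(n : ℝ) ^ p⁻¹⌋₊ : ℝ) + 1 ≤ 2 * (n : ℝ) ^ p⁻¹ := by
    linarith [Nat.floor_le (zero_le_one.trans hroot)]
  calc ((⌊(n : ℝ) ^ p⁻¹⌋₊ : ℝ) + 1) ^ 2 / n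
      ≤ (2 * (n : ℝ) ^ p⁻¹) ^ 2 / n := by gcongr
    _ = 4 * (n : ℝ) ^ (2 * p⁻¹ - 1) := by
        rw [Real.rpow_sub_one (by positivity), mul_pow, mul_comm (2 : ℝ) p⁻¹,
          ← Nat.cast_ofNat, Real.rpow_mul_natCast (by positivity)]
        ring

lemma tendsto_cesaro_zero_of_support_subset_floorPowSet (hp : 2 < p) {f : ℕ → ℝ}
    (hf0 : ∀ k, 0 ≤ f k) (hf : ∀ k ∉ floorPowSet p, f k = 0)
    (hfc : ∀ n, ∀ k < n, f k ≤ ⌊(n : ℝ) ^ p⁻¹⌋₊ + 1) :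
    Tendsto (fun n => (∑ k ∈ range n, f k) / n) atTop (nhds 0) := by
  refine squeeze_zero (fun n => div_nonneg (sum_nonneg fun k _ => hf0 k) n.cast_nonneg)
    (fun n => ?_) (tendsto_floor_rpow_inv_add_one_sq_div hp)
  rw [sq]
  gcongr
  exact sum_range_le_of_support_subset_floorPowSet (by linarith) (by positivity) hf (hfc n)

end

/-- For `p > 2`: `g^p` is unbounded, `N = {⌊n^p⌋}` has density zero, `g^p` vanishes off
`N`, yet the Cesàro means of `g^p` converge to `0`. -/
theorem stmt7 (p : ℝ) (hp : 2 < p) :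
    (¬ ∃ B : ℕ, ∀ j, gp p j ≤ B) ∧
    HasDensityZero {j : ℕ | ∃ n : ℕ, (j : ℤ) = ⌊(n : ℝ) ^ p⌋} ∧
    (∀ j : ℕ, j ∉ {j : ℕ | ∃ n : ℕ, (j : ℤ) = ⌊(n : ℝ) ^ p⌋} → gp p j = 0) ∧
    Tendsto (fun n => (∑ k ∈ Finset.range n, (gp p k : ℝ)) / n) atTop (nhds 0) := by
  have hp0 : 0 < p := by linarith
  refine ⟨?_, ?_, fun j => gp_eq_zero_of_notMem, ?_⟩
  · rintro ⟨B, hB⟩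
    exact Nat.not_succ_le_self B ((le_gp_floor_rpow hp0 (B + 1)).trans (hB _))
  · refine tendsto_cesaro_zero_of_support_subset_floorPowSet hp
      (Set.indicator_nonneg fun _ _ => zero_le_one) (fun k hk => Set.indicator_of_notMem hk _)
      fun n k _ => ?_
    exact Set.indicator_apply_le' (fun _ => le_add_of_nonneg_left (Nat.cast_nonneg _))
      fun _ => by positivity
  · refine tendsto_cesaro_zero_of_support_subset_floorPowSet hp (fun k => (gp p k).cast_nonneg)
      (fun k hk => by simp [gp_eq_zero_of_notMem hk]) fun n k hk => ?_
    exact_mod_cast (gp_le_floor_rpow_inv hp0 hk).trans (Nat.le_succ _)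
end

section
/- Let (f_n)_{n≥0} be a sequence of non-negative functions in L¹(Ω, 𝒜, μ), μ a finite measure, with f_n ≤ g a.e. for all n for some g ∈ L¹. Then (1/n) ∑_{j=0}^{n-1} f_j → 0 a.e. as n → ∞ if and only if there exists a sequence of measurable sets (A_n) with (1/n) ∑_{j=0}^{n-1} χ_{A_j} → 0 a.e. and χ_{Ω∖A_n} f_n → 0 a.e. as n → ∞. -/
/-!
If `f j ≤ g`, then `f j ≤ g · χ_{A j} + χ_{(A j)ᶜ} f j`, and Cesàro means preserve limits.
Conversely, Egorov's theorem and Borel–Cantelli turn a.e. convergence of the Cesàro means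
`Mₙ` to `0` into a deterministic decreasing rate: `Mₙ = o(εₙ)` a.e. for some `εₙ ↓ 0`.
Take `Aₙ = {fₙ ≥ εₙ}`: then `χ_{Aₙᶜ} fₙ ≤ εₙ`, and by Markov's inequality the Cesàro means of
`χ_{Aⱼ}` are at most `Mₙ / εₙ → 0`.
-/

open Filter Finset MeasureTheory Asymptotics Topology

theorem Nat.exists_monotone_tendsto_atTop_eventually_apply_le (N : ℕ → ℕ) :
    ∃ φ : ℕ → ℕ, Monotone φ ∧ Tendsto φ atTop atTop ∧ ∀ᶠ n in atTop, N (φ n) ≤ n := by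
  set φ : ℕ → ℕ := fun n => Nat.findGreatest (fun k => N k ≤ n) n
  have hφ : Tendsto φ atTop atTop := tendsto_atTop.2 fun k =>
    (eventually_ge_atTop (max (N k) k)).mono fun n hn =>
      Nat.le_findGreatest (le_of_max_le_right hn) (le_of_max_le_left hn)
  refine ⟨φ, fun a b hab => Nat.findGreatest_mono (fun k hk => hk.trans hab) hab, hφ, ?_⟩
  filter_upwards [hφ.eventually_ne_atTop 0] with n hn
  exact Nat.findGreatest_of_ne_zero (P := fun k => N k ≤ n) rfl hn

section Modulus

variable {Ω : Type*} [MeasurableSpace Ω] {μ : Measure Ω} [IsFiniteMeasure μ]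

/-- Egorov's theorem at tolerance `η k` off a set of measure `2⁻ᵏ`, combined with
Borel–Cantelli. -/
theorem exists_ae_eventually_forall_ge_dist_le {β : Type*} [PseudoMetricSpace β]
    {F : ℕ → Ω → β} {g : Ω → β} (hF : ∀ n, StronglyMeasurable (F n))
    (hg : StronglyMeasurable g) (h : ∀ᵐ ω ∂μ, Tendsto (F · ω) atTop (𝓝 (g ω)))
    {η : ℕ → ℝ} (hη : ∀ k, 0 < η k) :
    ∃ N : ℕ → ℕ, ∀ᵐ ω ∂μ, ∀ᶠ k in atTop, ∀ n ≥ N k, dist (F n ω) (g ω) ≤ η k := by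
  have egorov : ∀ k, ∃ s : Set Ω, μ s ≤ ENNReal.ofReal ((1 / 2) ^ k) ∧
      ∃ N, ∀ n ≥ N, ∀ ω ∉ s, dist (F n ω) (g ω) ≤ η k := by
    intro k
    obtain ⟨s, -, hsμ, hunif⟩ := tendstoUniformlyOn_of_ae_tendsto' hF hg h
      (ε := (1 / 2) ^ k) (by positivity)
    obtain ⟨N, hN⟩ := eventually_atTop.1 (Metric.tendstoUniformlyOn_iff.1 hunif (η k) (hη k))
    refine ⟨s, hsμ, N, fun n hn ω hω => ?_⟩
    rw [dist_comm]
    exact (hN n hn ω hω).le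
  choose s hsμ N hN using egorov
  have hsum : ∑' k, μ (s k) ≠ ⊤ := by
    refine ne_top_of_le_ne_top ?_ (ENNReal.tsum_le_tsum hsμ)
    rw [← ENNReal.ofReal_tsum_of_nonneg (fun k => by positivity) summable_geometric_two]
    exact ENNReal.ofReal_ne_top
  exact ⟨N, (ae_eventually_notMem hsum).mono fun ω hω =>
    hω.mono fun k hk n hn => hN k n hn ω hk⟩

theorem exists_antitone_isLittleO_ae {E : Type*} [NormedAddCommGroup E] {F : ℕ → Ω → E}
    (hF : ∀ n, AEStronglyMeasurable (F n) μ) (h : ∀ᵐ ω ∂μ, Tendsto (F · ω) atTop (𝓝 0)) :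
    ∃ ε : ℕ → ℝ, (∀ n, 0 < ε n) ∧ Antitone ε ∧ Tendsto ε atTop (𝓝 0) ∧
      ∀ᵐ ω ∂μ, (F · ω) =o[atTop] ε := by
  have hmk : ∀ᵐ ω ∂μ, ∀ n, F n ω = (hF n).mk _ ω := ae_all_iff.2 fun n => (hF n).ae_eq_mk
  have hmk_tendsto : ∀ᵐ ω ∂μ, Tendsto (fun n => (hF n).mk _ ω) atTop (𝓝 0) := by
    filter_upwards [h, hmk] with ω hω heq
    simpa only [heq] using hω
  obtain ⟨N, hN⟩ := exists_ae_eventually_forall_ge_dist_le (fun n => (hF n).stronglyMeasurable_mk)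
    stronglyMeasurable_const hmk_tendsto (η := fun k => (1 / 4 : ℝ) ^ k) fun k => by positivity
  obtain ⟨φ, hφ_mono, hφ, hNφ⟩ := Nat.exists_monotone_tendsto_atTop_eventually_apply_le N
  have hε : Tendsto (fun n => (1 / 2 : ℝ) ^ φ n) atTop (𝓝 0) :=
    (tendsto_pow_atTop_nhds_zero_of_lt_one (by norm_num) (by norm_num)).comp hφ
  refine ⟨fun n => (1 / 2 : ℝ) ^ φ n, fun n => by positivity,
    fun a b hab => pow_le_pow_of_le_one (by norm_num) (by norm_num) (hφ_mono hab), hε, ?_⟩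
  filter_upwards [hN, hmk] with ω hω heq
  -- `ε n ^ 2 = 4^{-φ n}` is the tolerance of the modulus at `k = φ n`
  have hsq : ∀ᶠ n in atTop, ‖F n ω‖ ≤ (1 / 2 : ℝ) ^ φ n * (1 / 2) ^ φ n := by
    filter_upwards [hφ.eventually hω, hNφ] with n hn hNn
    rw [heq, ← mul_pow, show (1 / 2 : ℝ) * (1 / 2) = 1 / 4 by norm_num, ← dist_zero_right]
    exact hn n hNn
  refine isLittleO_iff.2 fun c hc => ?_
  filter_upwards [hsq, hε.eventually (ge_mem_nhds hc)] with n hn hnc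
  rw [Real.norm_of_nonneg (by positivity)]
  exact hn.trans (mul_le_mul_of_nonneg_right hnc (by positivity))

end Modulus

theorem tendsto_cesaro_indicator_ge_zero {x ε : ℕ → ℝ} (hx : ∀ j, 0 ≤ x j) (hε : ∀ n, 0 < ε n)
    (hε_anti : Antitone ε) (h : (fun n => (∑ j ∈ range n, x j) / n) =o[atTop] ε) :
    Tendsto (fun n => (∑ j ∈ range n, if ε j ≤ x j then (1 : ℝ) else 0) / n) atTop (𝓝 0) := by
  refine squeeze_zero (fun n => div_nonneg (sum_nonneg fun j _ => by positivity) n.cast_nonneg)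
    (fun n => ?_) h.tendsto_div_nhds_zero
  -- Markov: `𝟙[ε j ≤ x j] ≤ x j / ε j ≤ x j / ε n` for `j < n`
  have hterm : ∀ j ∈ range n, (if ε j ≤ x j then (1 : ℝ) else 0) ≤ x j / ε n := by
    intro j hj
    split_ifs with hxj
    · exact (one_le_div (hε n)).2 ((hε_anti (mem_range.1 hj).le).trans hxj)
    · exact div_nonneg (hx j) (hε n).le
  rw [div_right_comm]
  gcongr
  rw [sum_div]
  exact sum_le_sum hterm

theorem tendsto_cesaro_zero_of_le_mul_add {x a b : ℕ → ℝ} {c : ℝ} (hx : ∀ j, 0 ≤ x j)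
    (hxab : ∀ j, x j ≤ c * a j + b j)
    (ha : Tendsto (fun n => (∑ j ∈ range n, a j) / n) atTop (𝓝 0))
    (hb : Tendsto b atTop (𝓝 0)) :
    Tendsto (fun n => (∑ j ∈ range n, x j) / n) atTop (𝓝 0) := by
  have hb_cesaro : Tendsto (fun n => (∑ j ∈ range n, b j) / n) atTop (𝓝 0) := by
    simpa only [div_eq_inv_mul] using hb.cesaro
  have hbound : Tendsto (fun n => c * ((∑ j ∈ range n, a j) / n) + (∑ j ∈ range n, b j) / n)
      atTop (𝓝 0) := by
    simpa using (ha.const_mul c).add hb_cesaro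
  refine squeeze_zero (fun n => div_nonneg (sum_nonneg fun j _ => hx j) n.cast_nonneg)
    (fun n => ?_) hbound
  rw [mul_div_assoc', ← add_div, mul_sum, ← sum_add_distrib]
  gcongr with j
  exact hxab j

theorem stmt10_general {Ω : Type*} [MeasurableSpace Ω] (μ : Measure Ω) [IsFiniteMeasure μ]
    (f : ℕ → Ω → ℝ) (g : Ω → ℝ)
    (hfint : ∀ n, Integrable (f n) μ)
    (hnn : ∀ n, 0 ≤ᵐ[μ] f n) (hdom : ∀ n, f n ≤ᵐ[μ] g) :
    (∀ᵐ ω ∂μ, Tendsto (fun n => (∑ j ∈ Finset.range n, f j ω) / n) atTop (nhds 0)) ↔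
      ∃ A : ℕ → Set Ω, (∀ n, MeasurableSet (A n)) ∧
        (∀ᵐ ω ∂μ, Tendsto
          (fun n => (∑ j ∈ Finset.range n, Set.indicator (A j) (fun _ => (1 : ℝ)) ω) / n)
          atTop (nhds 0)) ∧
        (∀ᵐ ω ∂μ, Tendsto (fun n => Set.indicator (A n)ᶜ (f n) ω) atTop (nhds 0)) := by
  have hnn' : ∀ᵐ ω ∂μ, ∀ n, 0 ≤ f n ω := ae_all_iff.2 hnn
  constructor
  · intro h
    have hmeas : ∀ n, AEStronglyMeasurable (fun ω => (∑ j ∈ range n, f j ω) / n) μ := by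
      have := fun j => (hfint j).aestronglyMeasurable
      fun_prop
    obtain ⟨ε, hε, hε_anti, hε0, hrate⟩ := exists_antitone_isLittleO_ae hmeas h
    set f' := fun j => (hfint j).aestronglyMeasurable.mk (f j)
    have hf' : ∀ᵐ ω ∂μ, ∀ j, f j ω = f' j ω :=
      ae_all_iff.2 fun j => (hfint j).aestronglyMeasurable.ae_eq_mk
    refine ⟨fun j => {ω | ε j ≤ f' j ω}, fun j => measurableSet_le measurable_const
      (hfint j).aestronglyMeasurable.stronglyMeasurable_mk.measurable, ?_, ?_⟩
    · filter_upwards [hrate, hf', hnn'] with ω hω heq hω0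
      simp only [heq] at hω hω0
      simpa only [Set.indicator_apply, Set.mem_ofPred_eq] using
        tendsto_cesaro_indicator_ge_zero hω0 hε hε_anti hω
    · filter_upwards [hf', hnn'] with ω heq hω0
      refine squeeze_zero (fun n => Set.indicator_nonneg (fun _ _ => hω0 n) _) (fun n => ?_) hε0
      rw [Set.indicator_apply]
      split_ifs with hmem
      · rw [Set.mem_compl_iff, Set.mem_ofPred_eq, not_le] at hmem
        rw [heq]
        exact hmem.le
      · exact (hε n).le
  · rintro ⟨A, -, hA, hAc⟩
    filter_upwards [hA, hAc, hnn', ae_all_iff.2 hdom] with ω hωA hωAc hω0 hωg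
    refine tendsto_cesaro_zero_of_le_mul_add hω0 (c := g ω) (fun j => ?_) hωA hωAc
    by_cases hmem : ω ∈ A j <;> simp [hmem, hωg j]

/-- Koopman-von Neumann in `L¹`, a.e. pointwise version: for a dominated nonnegative
sequence of integrable functions, the Cesàro means converge to `0` a.e. iff there are
measurable sets `A n` whose indicators have a.e. Cesàro limit `0` and with
`χ_{Ω∖Aₙ} fₙ → 0` a.e. -/
theorem stmt10 {Ω : Type*} [MeasurableSpace Ω] (μ : Measure Ω) [IsFiniteMeasure μ]
    (f : ℕ → Ω → ℝ) (g : Ω → ℝ)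
    (hfint : ∀ n, Integrable (f n) μ) (hgint : Integrable g μ)
    (hnn : ∀ n, 0 ≤ᵐ[μ] f n) (hdom : ∀ n, f n ≤ᵐ[μ] g) :
    (∀ᵐ ω ∂μ, Tendsto (fun n => (∑ j ∈ Finset.range n, f j ω) / n) atTop (nhds 0)) ↔
      ∃ A : ℕ → Set Ω, (∀ n, MeasurableSet (A n)) ∧
        (∀ᵐ ω ∂μ, Tendsto
          (fun n => (∑ j ∈ Finset.range n, Set.indicator (A j) (fun _ => (1 : ℝ)) ω) / n)
          atTop (nhds 0)) ∧
        (∀ᵐ ω ∂μ, Tendsto (fun n => Set.indicator (A n)ᶜ (f n) ω) atTop (nhds 0)) :=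
  stmt10_general μ f g hfint hnn hdom
end

section
/- Let (f_n)_{n≥0} be a sequence of non-negative functions in L¹(Ω, 𝒜, μ), μ a finite measure, dominated a.e. by some g ∈ L¹. Then (1/n) ∑_{j=0}^{n-1} f_j → 0 in L¹ norm if and only if there exist measurable sets (A_n) with μ-a.e. Cesàro density zero, i.e. (1/n) ∑_{j=0}^{n-1} χ_{A_j} → 0 in L¹ norm, and ‖χ_{Ω∖A_n} f_n‖₁ → 0 as n → ∞. -/
open Filter Finset MeasureTheory Topology

/-!
For nonnegative functions the `L¹` norm of a Cesàro mean is the Cesàro mean of the integrals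
`aⱼ = ‖fⱼ‖₁`, so everything reduces to scalar sequences.

If the means of `aⱼ` tend to `0`, choose thresholds `δⱼ ↓ 0` so slowly that the means of
`aⱼ / δⱼ` still tend to `0`: with `r` an antitone majorant of the means, `δ = √r` works. Markov's
inequality then gives `μ {fⱼ ≥ δⱼ} ≤ aⱼ / δⱼ`, so these sets have Cesàro density zero, while
`fⱼ < δⱼ` off them.

Conversely, truncating the dominating function at level `M` gives
`‖fⱼ‖₁ ≤ M μ(Aⱼ) + ‖(g - M)⁺‖₁ + ‖χ_{Ω∖Aⱼ} fⱼ‖₁`. Averaging, the Cesàro means of `aⱼ` are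
eventually at most `‖(g - M)⁺‖₁ + ε`, and `‖(g - M)⁺‖₁ → 0` as `M → ∞`.
-/

noncomputable def cesaro (a : ℕ → ℝ) (n : ℕ) : ℝ := (∑ j ∈ range n, a j) / n

theorem cesaro_nonneg {a : ℕ → ℝ} (ha : ∀ j, 0 ≤ a j) (n : ℕ) : 0 ≤ cesaro a n :=
  div_nonneg (sum_nonneg fun j _ => ha j) n.cast_nonneg

theorem cesaro_mono {a b : ℕ → ℝ} (hab : ∀ j, a j ≤ b j) (n : ℕ) : cesaro a n ≤ cesaro b n :=
  div_le_div_of_nonneg_right (sum_le_sum fun j _ => hab j) n.cast_nonneg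

theorem cesaro_add (a b : ℕ → ℝ) (n : ℕ) :
    cesaro (fun j => a j + b j) n = cesaro a n + cesaro b n := by
  simp only [cesaro, sum_add_distrib, add_div]

theorem cesaro_const_mul (c : ℝ) (a : ℕ → ℝ) (n : ℕ) :
    cesaro (fun j => c * a j) n = c * cesaro a n := by
  simp only [cesaro, ← mul_sum, mul_div_assoc]

theorem tendsto_cesaro {a : ℕ → ℝ} {x : ℝ} (ha : Tendsto a atTop (𝓝 x)) :
    Tendsto (cesaro a) atTop (𝓝 x) :=
  ha.cesaro.congr fun _ => inv_mul_eq_div _ _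

theorem cesaro_div_le_div {a δ : ℕ → ℝ} (ha : ∀ j, 0 ≤ a j) (hδ : Antitone δ)
    (hδ_pos : ∀ j, 0 < δ j) (n : ℕ) :
    cesaro (fun j => a j / δ j) n ≤ cesaro a n / δ n := by
  have hterm : ∀ j ∈ range n, a j / δ j ≤ a j / δ n := fun j hj =>
    div_le_div_of_nonneg_left (ha j) (hδ_pos n) (hδ (mem_range.1 hj).le)
  refine (div_le_div_of_nonneg_right (sum_le_sum hterm) n.cast_nonneg).trans_eq ?_
  rw [cesaro, ← sum_div, div_right_comm]

theorem exists_antitone_pos_majorant {c : ℕ → ℝ} (hc : Tendsto c atTop (𝓝 0)) :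
    ∃ r : ℕ → ℝ, Antitone r ∧ (∀ n, 0 < r n) ∧ (∀ n, c n ≤ r n) ∧
      Tendsto r atTop (𝓝 0) := by
  have hbdd : ∀ n, BddAbove (Set.range fun k => |c (n + k)|) := fun n =>
    hc.abs.bddAbove_range.mono (Set.range_subset_iff.2 fun k => Set.mem_range_self (n + k))
  set s : ℕ → ℝ := fun n => ⨆ k, |c (n + k)|
  have hle_s : ∀ n k, |c (n + k)| ≤ s n := fun n => le_ciSup (hbdd n)
  have hs_nonneg : ∀ n, 0 ≤ s n := fun n => (abs_nonneg _).trans (hle_s n 0)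
  have hs_anti : Antitone s := antitone_nat_of_succ_le fun n =>
    ciSup_le fun k => by simpa only [add_right_comm, add_assoc] using hle_s n (k + 1)
  have hs : Tendsto s atTop (𝓝 0) := by
    refine tendsto_order.2 ⟨fun a ha => .of_forall fun n => ha.trans_le (hs_nonneg n),
      fun ε hε => ?_⟩
    obtain ⟨N, hN⟩ :=
      eventually_atTop.1 (hc.abs.eventually_le_const (u := ε / 2) (by simpa using hε))
    exact eventually_atTop.2 ⟨N, fun n hn =>
      (ciSup_le fun k => hN (n + k) (by omega)).trans_lt (half_lt_self hε)⟩
  refine ⟨fun n => s n + 1 / (n + 1), hs_anti.add fun m n hmn => by gcongr,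
    fun n => add_pos_of_nonneg_of_pos (hs_nonneg n) Nat.one_div_pos_of_nat,
    fun n => (le_abs_self _).trans ((hle_s n 0).trans (le_add_of_nonneg_right
      Nat.one_div_pos_of_nat.le)),
    by simpa using hs.add tendsto_one_div_add_atTop_nhds_zero_nat⟩

theorem exists_tendsto_zero_cesaro_div {a : ℕ → ℝ} (ha : ∀ j, 0 ≤ a j)
    (h : Tendsto (cesaro a) atTop (𝓝 0)) :
    ∃ δ : ℕ → ℝ, (∀ n, 0 < δ n) ∧ Tendsto δ atTop (𝓝 0) ∧
      Tendsto (cesaro fun j => a j / δ j) atTop (𝓝 0) := by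
  obtain ⟨r, hr_anti, hr_pos, hr_le, hr⟩ := exists_antitone_pos_majorant h
  have hδ : Tendsto (fun n => √(r n)) atTop (𝓝 0) := by simpa using hr.sqrt
  refine ⟨fun n => √(r n), fun n => Real.sqrt_pos.2 (hr_pos n), hδ, squeeze_zero
    (cesaro_nonneg fun j => div_nonneg (ha j) (Real.sqrt_nonneg _)) (fun n => ?_) hδ⟩
  calc cesaro (fun j => a j / √(r j)) n
      ≤ cesaro a n / √(r n) :=
        cesaro_div_le_div ha (fun m n h => Real.sqrt_le_sqrt (hr_anti h))
          (fun j => Real.sqrt_pos.2 (hr_pos j)) n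
    _ ≤ r n / √(r n) := by gcongr; exact hr_le n
    _ = √(r n) := Real.div_sqrt

theorem tendsto_zero_of_forall_le_of_tendsto {α ι : Type*} {L : Filter α} {l : Filter ι}
    [l.NeBot] {a : α → ℝ} {b : ι → α → ℝ} {e : ι → ℝ} (ha : ∀ x, 0 ≤ a x)
    (hab : ∀ M, ∀ᶠ x in L, a x ≤ b M x) (hb : ∀ M, Tendsto (b M) L (𝓝 (e M)))
    (he : Tendsto e l (𝓝 0)) : Tendsto a L (𝓝 0) := by
  refine tendsto_order.2 ⟨fun c hc => .of_forall fun x => hc.trans_le (ha x), fun ε hε => ?_⟩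
  obtain ⟨M, hM⟩ := (he.eventually_lt_const hε).exists
  filter_upwards [hab M, (hb M).eventually_lt_const hM] with x hx hbx
  exact hx.trans_lt hbx

section Integrals

variable {Ω : Type*} [MeasurableSpace Ω] {μ : Measure Ω}

theorem integral_abs_sum_div_eq_cesaro {f : ℕ → Ω → ℝ} (hf : ∀ n, Integrable (f n) μ)
    (hf₀ : ∀ n, 0 ≤ᵐ[μ] f n) (n : ℕ) :
    ∫ ω, |(∑ j ∈ range n, f j ω) / n| ∂μ = cesaro (fun j => ∫ ω, f j ω ∂μ) n := by
  have hmean_nonneg : ∀ᵐ ω ∂μ, 0 ≤ (∑ j ∈ range n, f j ω) / n := by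
    filter_upwards [ae_all_iff.2 hf₀] with ω hω
    exact div_nonneg (sum_nonneg fun j _ => hω j) n.cast_nonneg
  rw [integral_congr_ae (hmean_nonneg.mono fun ω => abs_of_nonneg), integral_div,
    integral_finsetSum _ fun j _ => hf j, cesaro]

theorem integral_abs_sum_indicator_div_eq_cesaro [IsFiniteMeasure μ] {A : ℕ → Set Ω}
    (hA : ∀ n, MeasurableSet (A n)) (n : ℕ) :
    ∫ ω, |(∑ j ∈ range n, (A j).indicator (fun _ => (1 : ℝ)) ω) / n| ∂μ
      = cesaro (fun j => μ.real (A j)) n := by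
  rw [integral_abs_sum_div_eq_cesaro (fun j => (integrable_const 1).indicator (hA j))
    (fun j => .of_forall (Set.indicator_nonneg fun _ _ => zero_le_one))]
  simp_rw [← Pi.one_def, integral_indicator_one (hA _)]

theorem measureReal_toMeasurable_le_integral_div {f : Ω → ℝ} (hf₀ : 0 ≤ᵐ[μ] f)
    (hf : Integrable f μ) {δ : ℝ} (hδ : 0 < δ) :
    μ.real (toMeasurable μ {ω | δ ≤ f ω}) ≤ (∫ ω, f ω ∂μ) / δ := by
  rw [measureReal_def, measure_toMeasurable, ← measureReal_def, le_div_iff₀' hδ]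
  exact mul_meas_ge_le_integral_of_nonneg hf₀ hf δ

theorem integral_abs_indicator_compl_toMeasurable_le [IsFiniteMeasure μ] {f : Ω → ℝ}
    (hf₀ : 0 ≤ᵐ[μ] f) {δ : ℝ} (hδ : 0 ≤ δ) :
    ∫ ω, |(toMeasurable μ {ω | δ ≤ f ω})ᶜ.indicator f ω| ∂μ ≤ δ * μ.real Set.univ := by
  have hle : ∀ᵐ ω ∂μ, |(toMeasurable μ {ω | δ ≤ f ω})ᶜ.indicator f ω| ≤ δ := by
    filter_upwards [hf₀] with ω hω
    by_cases hA : ω ∈ toMeasurable μ {ω | δ ≤ f ω}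
    · simpa [hA] using hδ
    · have hfδ : f ω < δ := not_le.1 fun h => hA (subset_toMeasurable _ _ h)
      simpa [hA, abs_of_nonneg hω] using hfδ.le
  calc ∫ ω, |(toMeasurable μ {ω | δ ≤ f ω})ᶜ.indicator f ω| ∂μ ≤ ∫ _, δ ∂μ :=
        integral_mono_of_nonneg (.of_forall fun _ => abs_nonneg _) (integrable_const δ) hle
    _ = δ * μ.real Set.univ := by rw [integral_const, smul_eq_mul, mul_comm]

theorem integral_le_mul_measureReal_add_integral_max_sub_add [IsFiniteMeasure μ]
    {f g : Ω → ℝ} (hf : Integrable f μ) (hg : Integrable g μ) (hfg : f ≤ᵐ[μ] g)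
    {A : Set Ω} (hA : MeasurableSet A) (M : ℝ) :
    ∫ ω, f ω ∂μ ≤ M * μ.real A + ∫ ω, max (g ω - M) 0 ∂μ + ∫ ω, |Aᶜ.indicator f ω| ∂μ := by
  have hexcess : Integrable (fun ω => max (g ω - M) 0) μ :=
    (hg.sub (integrable_const M)).pos_part
  have hon : ∫ ω in A, f ω ∂μ ≤ M * μ.real A + ∫ ω, max (g ω - M) 0 ∂μ :=
    calc ∫ ω in A, f ω ∂μ ≤ ∫ ω in A, (M + max (g ω - M) 0) ∂μ := by
          refine setIntegral_mono_ae hf.integrableOn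
            ((integrable_const M).add hexcess).integrableOn ?_
          filter_upwards [hfg] with ω hω
          linarith [le_max_left (g ω - M) 0]
      _ = M * μ.real A + ∫ ω in A, max (g ω - M) 0 ∂μ := by
          rw [integral_add (integrable_const M).integrableOn hexcess.integrableOn,
            setIntegral_const, smul_eq_mul, mul_comm]
      _ ≤ M * μ.real A + ∫ ω, max (g ω - M) 0 ∂μ :=
          add_le_add le_rfl
            (setIntegral_le_integral hexcess (.of_forall fun _ => le_max_right _ _))
  have hoff : ∫ ω in Aᶜ, f ω ∂μ ≤ ∫ ω, |Aᶜ.indicator f ω| ∂μ := by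
    rw [← integral_indicator hA.compl]
    exact integral_mono (hf.indicator hA.compl) (hf.indicator hA.compl).abs
      fun _ => le_abs_self _
  linarith [integral_add_compl hA hf]

theorem tendsto_integral_max_sub_natCast {g : Ω → ℝ} (hg : Integrable g μ) :
    Tendsto (fun M : ℕ => ∫ ω, max (g ω - M) 0 ∂μ) atTop (𝓝 0) := by
  have hlim : ∀ ω, Tendsto (fun M : ℕ => max (g ω - M) 0) atTop (𝓝 0) := fun ω =>
    tendsto_const_nhds.congr' <| (eventually_ge_atTop ⌈g ω⌉₊).mono fun M hM =>
      (max_eq_right (sub_nonpos.2 ((Nat.le_ceil _).trans (by exact_mod_cast hM)))).symm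
  simpa using tendsto_integral_of_dominated_convergence (fun ω => |g ω|)
    (fun M => by fun_prop) hg.abs
    (fun M => .of_forall fun ω => by
      rw [Real.norm_of_nonneg (le_max_right _ _)]
      exact max_le (by linarith [le_abs_self (g ω), M.cast_nonneg (α := ℝ)]) (abs_nonneg _))
    (.of_forall hlim)

end Integrals

/-- Koopman-von Neumann in `L¹`, norm version: for a dominated nonnegative sequence of
integrable functions, the Cesàro means converge to `0` in `L¹` norm iff there are
measurable sets `A n` whose indicators have Cesàro limit `0` in `L¹` norm and with
`‖χ_{Ω∖Aₙ} fₙ‖₁ → 0`. -/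
theorem stmt11 {Ω : Type*} [MeasurableSpace Ω] (μ : Measure Ω) [IsFiniteMeasure μ]
    (f : ℕ → Ω → ℝ) (g : Ω → ℝ)
    (hfint : ∀ n, Integrable (f n) μ) (hgint : Integrable g μ)
    (hnn : ∀ n, 0 ≤ᵐ[μ] f n) (hdom : ∀ n, f n ≤ᵐ[μ] g) :
    Tendsto (fun n => ∫ ω, |(∑ j ∈ Finset.range n, f j ω) / n| ∂μ) atTop (nhds 0) ↔
      ∃ A : ℕ → Set Ω, (∀ n, MeasurableSet (A n)) ∧
        Tendsto (fun n => ∫ ω,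
            |(∑ j ∈ Finset.range n, Set.indicator (A j) (fun _ => (1 : ℝ)) ω) / n| ∂μ)
          atTop (nhds 0) ∧
        Tendsto (fun n => ∫ ω, |Set.indicator (A n)ᶜ (f n) ω| ∂μ) atTop (nhds 0) := by
  have hint_nonneg : ∀ j, 0 ≤ ∫ ω, f j ω ∂μ := fun j => integral_nonneg_of_ae (hnn j)
  simp_rw [integral_abs_sum_div_eq_cesaro hfint hnn]
  constructor
  · intro h
    obtain ⟨δ, hδ_pos, hδ, hcesaro⟩ := exists_tendsto_zero_cesaro_div hint_nonneg h
    have hA : ∀ j, MeasurableSet (toMeasurable μ {ω | δ j ≤ f j ω}) := fun j =>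
      measurableSet_toMeasurable _ _
    refine ⟨fun j => toMeasurable μ {ω | δ j ≤ f j ω}, hA, ?_, ?_⟩
    · simp_rw [integral_abs_sum_indicator_div_eq_cesaro hA]
      exact squeeze_zero (cesaro_nonneg fun _ => measureReal_nonneg)
        (cesaro_mono fun j => measureReal_toMeasurable_le_integral_div (hnn j) (hfint j)
          (hδ_pos j)) hcesaro
    · exact squeeze_zero (fun n => integral_nonneg fun _ => abs_nonneg _)
        (fun n => integral_abs_indicator_compl_toMeasurable_le (hnn n) (hδ_pos n).le)
        (by simpa using hδ.mul_const (μ.real Set.univ))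
  · rintro ⟨A, hA, hdens, htail⟩
    simp_rw [integral_abs_sum_indicator_div_eq_cesaro hA] at hdens
    refine tendsto_zero_of_forall_le_of_tendsto (cesaro_nonneg hint_nonneg)
      (fun M : ℕ => .of_forall <| cesaro_mono fun j =>
        integral_le_mul_measureReal_add_integral_max_sub_add (hfint j) hgint (hdom j) (hA j) M)
      (fun M => ?_) (tendsto_integral_max_sub_natCast hgint)
    have hlim := ((hdens.const_mul (M : ℝ)).add (tendsto_cesaro (tendsto_const_nhds
      (x := ∫ ω, max (g ω - M) 0 ∂μ)))).add (tendsto_cesaro htail)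
    rw [mul_zero, zero_add, add_zero] at hlim
    exact hlim.congr fun n => by rw [cesaro_add, cesaro_add, cesaro_const_mul]
end
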